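/- arXiv:2507.15801 — 3 statements merged into one kernel-verified Lean document; each statement's English description precedes it below -/
import Mathlib

section
/- Suppose μ^ν converge setwise to μ on the nonempty closed set Ξ ⊆ ℝ^d, i.e. μ^ν(E) → μ(E) for every Borel set E ⊆ Ξ. Let g : Ξ × ℝⁿ → ℝ be jointly Borel measurable with g(ξ,·) lsc for every ξ, and assume g(·,x) is uniformly bounded on Ξ, locally uniformly in x. Then: (a) for every sequence x^ν → x, liminf_ν E_{μ^ν}[g(ξ,x^ν)] ≥ E_μ[g(ξ,x)]; (b) for every x₀ ∈ ℝⁿ, E_{μ^ν}[g(ξ,x₀)] → E_μ[g(ξ,x₀)]. -/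
open MeasureTheory Filter Topology Metric Set Pointwise ENNReal NNReal

noncomputable section

/-- Core bounded-convergence lemma under setwise convergence, nonneg case,
via the layer cake formula. -/
lemma tendsto_integral_of_setwise_nonneg
    {α : Type*} [MeasurableSpace α]
    (μ : Measure α) [IsProbabilityMeasure μ]
    (μs : ℕ → Measure α) [∀ ν, IsProbabilityMeasure (μs ν)]
    (hsetwise : ∀ E : Set α, MeasurableSet E →
      Tendsto (fun ν => (μs ν E).toReal) atTop (𝓝 (μ E).toReal))
    (f : α → ℝ) (hf : Measurable f) (C : ℝ)
    (h0 : ∀ a, 0 ≤ f a) (hC : ∀ a, f a ≤ C) :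
    Tendsto (fun ν => ∫ a, f a ∂(μs ν)) atTop (𝓝 (∫ a, f a ∂μ)) := by
  have hmeasE : ∀ t : ℝ, MeasurableSet {a | t < f a} := fun t =>
    measurableSet_lt measurable_const hf
  -- setwise convergence in ℝ≥0∞
  have hset' : ∀ E : Set α, MeasurableSet E →
      Tendsto (fun ν => μs ν E) atTop (𝓝 (μ E)) := by
    intro E hE
    have h := ENNReal.tendsto_ofReal (hsetwise E hE)
    simpa [ENNReal.ofReal_toReal (measure_ne_top _ E)] using h
  -- layer cake representation
  have key : ∀ (ρ : Measure α), IsProbabilityMeasure ρ →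
      ∫ a, f a ∂ρ = (∫⁻ t in Ioi (0:ℝ), ρ {a | t < f a}).toReal := by
    intro ρ hρ
    rw [integral_eq_lintegral_of_nonneg_ae (Eventually.of_forall h0)
      hf.aestronglyMeasurable,
      lintegral_eq_lintegral_meas_lt ρ (Eventually.of_forall h0) hf.aemeasurable]
  -- convergence of the lintegrals over (0,∞)
  have hlim : Tendsto (fun ν => ∫⁻ t in Ioi (0:ℝ), μs ν {a | t < f a}) atTop
      (𝓝 (∫⁻ t in Ioi (0:ℝ), μ {a | t < f a})) := by
    apply tendsto_lintegral_of_dominated_convergence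
      (bound := Set.indicator (Ioc 0 C) fun _ => (1 : ℝ≥0∞))
    · intro ν
      have hanti : Antitone fun t : ℝ => μs ν {a | t < f a} := by
        intro s t hst
        exact measure_mono fun a ha => lt_of_le_of_lt hst ha
      exact hanti.measurable
    · intro ν
      filter_upwards [ae_restrict_mem measurableSet_Ioi] with t ht
      by_cases hmem : t ∈ Ioc (0:ℝ) C
      · simp only [Set.indicator_of_mem hmem]
        exact prob_le_one
      · simp only [Set.indicator_of_notMem hmem]
        have htC : C < t := by
          rcases lt_or_ge C t with h | h
          · exact h
          · exact absurd ⟨ht, h⟩ hmem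
        have : {a | t < f a} = ∅ := by
          ext a
          simp only [Set.mem_setOf_eq, Set.mem_empty_iff_false, iff_false, not_lt]
          exact (hC a).trans htC.le
        simp [this]
    · rw [lintegral_indicator measurableSet_Ioc]
      simp only [lintegral_one, Measure.restrict_restrict measurableSet_Ioc,
        Measure.restrict_apply_univ]
      exact ((measure_mono (Set.inter_subset_left)).trans_lt
        (by simp [Real.volume_Ioc] : volume (Ioc (0:ℝ) C) < ⊤)).ne
    · filter_upwards with t
      exact hset' _ (hmeasE t)
  have hfin : (∫⁻ t in Ioi (0:ℝ), μ {a | t < f a}) ≠ ⊤ := by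
    rw [← lintegral_eq_lintegral_meas_lt μ (Eventually.of_forall h0) hf.aemeasurable]
    have : (∫⁻ a, ENNReal.ofReal (f a) ∂μ) ≤ ENNReal.ofReal C := by
      calc (∫⁻ a, ENNReal.ofReal (f a) ∂μ) ≤ ∫⁻ _, ENNReal.ofReal C ∂μ :=
            lintegral_mono fun a => ENNReal.ofReal_le_ofReal (hC a)
        _ = ENNReal.ofReal C := by simp
    exact (this.trans_lt ENNReal.ofReal_lt_top).ne
  have := (ENNReal.tendsto_toReal hfin).comp hlim
  rw [key μ inferInstance]
  refine this.congr fun ν => ?_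
  simp only [Function.comp_apply]
  rw [key (μs ν) inferInstance]

/-- Bounded measurable functions are integrable w.r.t. finite measures. -/
lemma integrable_of_bound {α : Type*} [MeasurableSpace α]
    (ρ : Measure α) [IsFiniteMeasure ρ] (f : α → ℝ) (hf : Measurable f)
    (M : ℝ) (hM : ∀ᵐ a ∂ρ, |f a| ≤ M) : Integrable f ρ :=
  (integrable_const M).mono' hf.aestronglyMeasurable
    (by filter_upwards [hM] with a ha using by simpa using ha)

/-- Bounded-convergence under setwise convergence, for functions bounded on a
conull set `Ξ`. -/
lemma tendsto_integral_of_setwise_abs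
    {α : Type*} [MeasurableSpace α]
    (μ : Measure α) [IsProbabilityMeasure μ]
    (μs : ℕ → Measure α) [∀ ν, IsProbabilityMeasure (μs ν)]
    (hsetwise : ∀ E : Set α, MeasurableSet E →
      Tendsto (fun ν => (μs ν E).toReal) atTop (𝓝 (μ E).toReal))
    (Ξ : Set α) (hΞ : MeasurableSet Ξ) (hμΞ : μ Ξᶜ = 0) (hμsΞ : ∀ ν, μs ν Ξᶜ = 0)
    (f : α → ℝ) (hf : Measurable f) (M : ℝ) (hM0 : 0 ≤ M)
    (hM : ∀ a ∈ Ξ, |f a| ≤ M) :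
    Tendsto (fun ν => ∫ a, f a ∂(μs ν)) atTop (𝓝 (∫ a, f a ∂μ)) := by
  set F : α → ℝ := Ξ.indicator fun a => f a + M with hF
  have hFmeas : Measurable F := (hf.add measurable_const).indicator hΞ
  have hF0 : ∀ a, 0 ≤ F a := by
    intro a
    by_cases ha : a ∈ Ξ
    · rw [hF, Set.indicator_of_mem ha]
      have := (abs_le.1 (hM a ha)).1
      linarith
    · rw [hF, Set.indicator_of_notMem ha]
  have hFC : ∀ a, F a ≤ 2 * M := by
    intro a
    by_cases ha : a ∈ Ξ
    · rw [hF, Set.indicator_of_mem ha]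
      have := (abs_le.1 (hM a ha)).2
      linarith
    · rw [hF, Set.indicator_of_notMem ha]; linarith
  have key : ∀ (ρ : Measure α), IsProbabilityMeasure ρ → ρ Ξᶜ = 0 →
      ∫ a, F a ∂ρ = (∫ a, f a ∂ρ) + M := by
    intro ρ hρ hρΞ
    have haeΞ : ∀ᵐ a ∂ρ, a ∈ Ξ := by
      rw [ae_iff]
      exact hρΞ
    have hae : F =ᵐ[ρ] fun a => f a + M := by
      filter_upwards [haeΞ] with a ha
      rw [hF, Set.indicator_of_mem ha]
    have hfint : Integrable f ρ := by
      apply integrable_of_bound ρ f hf M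
      filter_upwards [haeΞ] with a ha using hM a ha
    rw [integral_congr_ae hae, integral_add hfint (integrable_const M),
      integral_const]
    simp
  have h := tendsto_integral_of_setwise_nonneg μ μs hsetwise F hFmeas (2 * M) hF0 hFC
  rw [key μ inferInstance hμΞ] at h
  have h2 := h.sub (tendsto_const_nhds (x := M))
  simp only [add_sub_cancel_right] at h2
  refine h2.congr fun ν => ?_
  rw [key (μs ν) inferInstance (hμsΞ ν)]
  ring


/-- Proposition 3.8: convergence of expectations under setwise convergence. -/
theorem setwise_convergence_expectations
    {d n : ℕ}
    (Ξ : Set (EuclideanSpace ℝ (Fin d))) (hΞne : Ξ.Nonempty) (hΞcl : IsClosed Ξ)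
    (μ : Measure (EuclideanSpace ℝ (Fin d))) [IsProbabilityMeasure μ] (hμΞ : μ Ξᶜ = 0)
    (μs : ℕ → Measure (EuclideanSpace ℝ (Fin d))) [∀ ν, IsProbabilityMeasure (μs ν)]
    (hμsΞ : ∀ ν, μs ν Ξᶜ = 0)
    (hsetwise : ∀ E : Set (EuclideanSpace ℝ (Fin d)), MeasurableSet E →
        Tendsto (fun ν => (μs ν E).toReal) atTop (𝓝 (μ E).toReal))
    (g : EuclideanSpace ℝ (Fin d) → EuclideanSpace ℝ (Fin n) → ℝ)
    (hgmeas : Measurable fun q : EuclideanSpace ℝ (Fin d) × EuclideanSpace ℝ (Fin n) =>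
      g q.1 q.2)
    (hglsc : ∀ ξ, LowerSemicontinuous (g ξ))
    (hbd : ∀ x, ∃ ε > 0, ∃ M : ℝ, ∀ ξ ∈ Ξ, ∀ y ∈ closedBall x ε, |g ξ y| ≤ M) :
    (∀ (x : EuclideanSpace ℝ (Fin n)) (xs : ℕ → EuclideanSpace ℝ (Fin n)),
      Tendsto xs atTop (𝓝 x) →
      (∫ ξ, g ξ x ∂μ) ≤ liminf (fun ν => ∫ ξ, g ξ (xs ν) ∂(μs ν)) atTop) ∧
    (∀ x0 : EuclideanSpace ℝ (Fin n),
      Tendsto (fun ν => ∫ ξ, g ξ x0 ∂(μs ν)) atTop (𝓝 (∫ ξ, g ξ x0 ∂μ))) := by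
  have hΞm : MeasurableSet Ξ := hΞcl.measurableSet
  have hgx_meas : ∀ y, Measurable fun ξ => g ξ y := fun y =>
    hgmeas.comp (measurable_id.prodMk measurable_const)
  constructor
  · intro x xs hxs
    obtain ⟨ε, εpos, M, hM⟩ := hbd x
    obtain ⟨ξ0, hξ0⟩ := hΞne
    have hM0 : 0 ≤ M := (abs_nonneg _).trans (hM ξ0 hξ0 x (mem_closedBall_self εpos.le))
    obtain ⟨N, hN⟩ := eventually_atTop.mp (hxs.eventually (closedBall_mem_nhds x εpos))
    set trunc : ℝ → ℝ := fun r => max (min r M) (-M) with htrunc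
    have htr_le : ∀ r, trunc r ≤ M := fun r => max_le (min_le_right _ _) (by linarith)
    have htr_ge : ∀ r, -M ≤ trunc r := fun r => le_max_right _ _
    have htr_eq : ∀ r, |r| ≤ M → trunc r = r := by
      intro r hr
      obtain ⟨h1, h2⟩ := abs_le.1 hr
      simp only [htrunc]
      rw [min_eq_left h2, max_eq_left h1]
    set φ : ℕ → EuclideanSpace ℝ (Fin d) → ℝ := fun ν ξ => trunc (g ξ (xs ν)) with hφ
    set ψ : EuclideanSpace ℝ (Fin d) → ℝ := fun ξ => trunc (g ξ x) with hψ
    have hφmeas : ∀ ν, Measurable (φ ν) := fun ν =>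
      ((hgx_meas (xs ν)).min measurable_const).max measurable_const
    have hψmeas : Measurable ψ := ((hgx_meas x).min measurable_const).max measurable_const
    set hfun : ℕ → EuclideanSpace ℝ (Fin d) → ℝ :=
      fun k ξ => min (ψ ξ) (⨅ j, φ (k + j) ξ) with hhfun
    have hbdd : ∀ k ξ, BddBelow (Set.range fun j => φ (k + j) ξ) := fun k ξ =>
      ⟨-M, by rintro r ⟨j, rfl⟩; exact htr_ge _⟩
    have hhmeas : ∀ k, Measurable (hfun k) := fun k =>
      hψmeas.min (Measurable.iInf fun j => hφmeas (k + j))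
    have hhleψ : ∀ k ξ, hfun k ξ ≤ ψ ξ := fun k ξ => min_le_left _ _
    have hhgeM : ∀ k ξ, -M ≤ hfun k ξ := fun k ξ =>
      le_min (htr_ge _) (le_ciInf fun j => htr_ge _)
    have hhabs : ∀ k ξ, |hfun k ξ| ≤ M := fun k ξ =>
      abs_le.2 ⟨hhgeM k ξ, (hhleψ k ξ).trans (htr_le _)⟩
    have hhleφ : ∀ k ν, k ≤ ν → ∀ ξ, hfun k ξ ≤ φ ν ξ := by
      intro k ν hkν ξ
      refine (min_le_right _ _).trans ?_
      have h := ciInf_le (hbdd k ξ) (ν - k)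
      rwa [Nat.add_sub_cancel' hkν] at h
    have haeμ : ∀ᵐ ξ ∂μ, ξ ∈ Ξ := by rw [ae_iff]; exact hμΞ
    have haeμs : ∀ ν, ∀ᵐ ξ ∂(μs ν), ξ ∈ Ξ := fun ν => by rw [ae_iff]; exact hμsΞ ν
    have hψeq : ∀ ξ ∈ Ξ, ψ ξ = g ξ x := fun ξ hξ =>
      htr_eq _ (hM ξ hξ x (mem_closedBall_self εpos.le))
    have hφeq : ∀ ν, N ≤ ν → ∀ ξ ∈ Ξ, φ ν ξ = g ξ (xs ν) := fun ν hν ξ hξ =>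
      htr_eq _ (hM ξ hξ (xs ν) (hN ν hν))
    have hconv : ∀ ξ ∈ Ξ, Tendsto (fun k => hfun k ξ) atTop (𝓝 (ψ ξ)) := by
      intro ξ hξ
      refine tendsto_order.2 ⟨?_, ?_⟩
      · intro y hy
        obtain ⟨y', hy1, hy2⟩ := exists_between hy
        have hy2' : y' < g ξ x := by rwa [hψeq ξ hξ] at hy2
        obtain ⟨N', hN'⟩ := eventually_atTop.mp (hxs.eventually (hglsc ξ x y' hy2'))
        rw [eventually_atTop]
        refine ⟨N', fun k hk => ?_⟩
        have h1 : min y' M ≤ ⨅ j, φ (k + j) ξ := by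
          apply le_ciInf
          intro j
          have hlt : y' ≤ g ξ (xs (k + j)) := (hN' (k + j) (hk.trans (Nat.le_add_right _ _))).le
          calc min y' M ≤ min (g ξ (xs (k + j))) M := min_le_min hlt le_rfl
            _ ≤ φ (k + j) ξ := le_max_left _ _
        have hyM : y < M := hy.trans_le (htr_le _)
        calc y < min (ψ ξ) (min y' M) := lt_min hy (lt_min hy1 hyM)
          _ ≤ hfun k ξ := min_le_min le_rfl h1
      · intro y hy
        exact Eventually.of_forall fun k => (hhleψ k ξ).trans_lt hy
    have step1 : ∀ k, Tendsto (fun ν => ∫ ξ, hfun k ξ ∂(μs ν)) atTop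
        (𝓝 (∫ ξ, hfun k ξ ∂μ)) := fun k =>
      tendsto_integral_of_setwise_abs μ μs hsetwise Ξ hΞm hμΞ hμsΞ
        (hfun k) (hhmeas k) M hM0 (fun a _ => hhabs k a)
    have step2 : ∀ k, ∀ᶠ ν in atTop,
        ∫ ξ, hfun k ξ ∂(μs ν) ≤ ∫ ξ, g ξ (xs ν) ∂(μs ν) := by
      intro k
      rw [eventually_atTop]
      refine ⟨max k N, fun ν hν => ?_⟩
      have hle : ∫ ξ, hfun k ξ ∂(μs ν) ≤ ∫ ξ, φ ν ξ ∂(μs ν) :=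
        integral_mono
          (integrable_of_bound _ _ (hhmeas k) M (Eventually.of_forall fun a => hhabs k a))
          (integrable_of_bound _ _ (hφmeas ν) M
            (Eventually.of_forall fun a => abs_le.2 ⟨htr_ge _, htr_le _⟩))
          (hhleφ k ν ((le_max_left _ _).trans hν))
      refine hle.trans_eq (integral_congr_ae ?_)
      filter_upwards [haeμs ν] with ξ hξ
      exact hφeq ν ((le_max_right _ _).trans hν) ξ hξ
    set I : ℕ → ℝ := fun ν => ∫ ξ, g ξ (xs ν) ∂(μs ν) with hI
    have hIbd : ∀ ν, N ≤ ν → |I ν| ≤ M := by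
      intro ν hν
      have hb : ∀ᵐ ξ ∂(μs ν), ‖g ξ (xs ν)‖ ≤ M := by
        filter_upwards [haeμs ν] with ξ hξ using hM ξ hξ (xs ν) (hN ν hν)
      calc |I ν| = ‖I ν‖ := rfl
        _ ≤ M * ((μs ν) Set.univ).toReal := norm_integral_le_of_norm_le_const hb
        _ = M := by simp
    have hkey : ∀ k, ∫ ξ, hfun k ξ ∂μ ≤ liminf I atTop := by
      intro k
      rw [← (step1 k).liminf_eq]
      exact liminf_le_liminf (step2 k) (step1 k).isBoundedUnder_ge
        (isCoboundedUnder_ge_of_eventually_le atTop (eventually_atTop.2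
          ⟨N, fun ν hν => (abs_le.1 (hIbd ν hν)).2⟩))
    have step3 : Tendsto (fun k => ∫ ξ, hfun k ξ ∂μ) atTop (𝓝 (∫ ξ, ψ ξ ∂μ)) := by
      apply tendsto_integral_of_dominated_convergence (fun _ => M)
        (fun k => (hhmeas k).aestronglyMeasurable)
        (integrable_const M)
        (fun k => Eventually.of_forall fun a => by simpa using hhabs k a)
      filter_upwards [haeμ] with ξ hξ using hconv ξ hξ
    have hfinal : ∫ ξ, ψ ξ ∂μ ≤ liminf I atTop :=
      le_of_tendsto step3 (Eventually.of_forall hkey)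
    have heq : ∫ ξ, g ξ x ∂μ = ∫ ξ, ψ ξ ∂μ := by
      apply integral_congr_ae
      filter_upwards [haeμ] with ξ hξ using (hψeq ξ hξ).symm
    rw [heq]
    exact hfinal
  · intro x0
    obtain ⟨ε, εpos, M, hM⟩ := hbd x0
    obtain ⟨ξ0, hξ0⟩ := hΞne
    have hM0 : 0 ≤ M := (abs_nonneg _).trans (hM ξ0 hξ0 x0 (mem_closedBall_self εpos.le))
    exact tendsto_integral_of_setwise_abs μ μs hsetwise Ξ hΞm hμΞ hμsΞ
      (fun ξ => g ξ x0) (hgx_meas x0) M hM0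
      (fun a ha => hM a ha x0 (mem_closedBall_self εpos.le))

end
end

section
/- Suppose g₀ : ℝⁿ → [-∞,∞] is proper lsc, h : ℝ^m → [-∞,∞] is proper, lsc and nondecreasing, the component functions g_i : Ξ × ℝⁿ → ℝ of G are jointly Borel measurable with g_i(ξ,·) lsc and g_i(·,x) uniformly bounded on Ξ locally uniformly in x, and argmin φ ≠ ∅. Take G^ν = G. If the total variation distance d_TV(μ^ν,μ) → 0 and λ^ν ∈ (0,∞) → 0 with (1/λ^ν) d_TV(μ^ν,μ)^α → 0, then f^ν epi-converges to f; in particular limsup_ν (inf f^ν) ≤ inf f = inf φ, and LimOut(ε^ν-argmin f^ν) ⊆ ε-argmin f whenever ε^ν ∈ [0,∞) → ε. -/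
open MeasureTheory Filter Topology Metric Set Pointwise

noncomputable section

/-- Euclidean (ℓ²) norm on `Fin m → ℝ`. -/
def en2 {m : ℕ} (u : Fin m → ℝ) : ℝ := Real.sqrt (∑ i, u i ^ 2)

/-- Componentwise expectation of a vector-valued integrand. -/
def EV {d n m : ℕ} (μ : Measure (EuclideanSpace ℝ (Fin d)))
    (G : EuclideanSpace ℝ (Fin d) → EuclideanSpace ℝ (Fin n) → Fin m → ℝ)
    (x : EuclideanSpace ℝ (Fin n)) : Fin m → ℝ :=
  fun i => ∫ ξ, G ξ x i ∂μ

/-- The actual objective `φ`. -/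
def phiFun {d n m : ℕ} (g0 : EuclideanSpace ℝ (Fin n) → EReal)
    (h : (Fin m → ℝ) → EReal) (μ : Measure (EuclideanSpace ℝ (Fin d)))
    (G : EuclideanSpace ℝ (Fin d) → EuclideanSpace ℝ (Fin n) → Fin m → ℝ) :
    EuclideanSpace ℝ (Fin n) → EReal :=
  fun x => g0 x + h (EV μ G x)

/-- The Rockafellian `f`. -/
def rock {d n m : ℕ} (g0 : EuclideanSpace ℝ (Fin n) → EReal)
    (h : (Fin m → ℝ) → EReal) (μ : Measure (EuclideanSpace ℝ (Fin d)))
    (G : EuclideanSpace ℝ (Fin d) → EuclideanSpace ℝ (Fin n) → Fin m → ℝ) :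
    (Fin m → ℝ) × EuclideanSpace ℝ (Fin n) → EReal :=
  fun p => g0 p.2 + h (p.1 + EV μ G p.2) + (if p.1 = 0 then (0 : EReal) else ⊤)

/-- The approximating Rockafellian with distribution `μ'`, mapping `G'`, parameters `α`, `lam`. -/
def rockApprox {d n m : ℕ} (g0 : EuclideanSpace ℝ (Fin n) → EReal)
    (h : (Fin m → ℝ) → EReal) (μ' : Measure (EuclideanSpace ℝ (Fin d)))
    (G' : EuclideanSpace ℝ (Fin d) → EuclideanSpace ℝ (Fin n) → Fin m → ℝ)
    (α lam : ℝ) : (Fin m → ℝ) × EuclideanSpace ℝ (Fin n) → EReal :=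
  fun p => g0 p.2 + h (p.1 + EV μ' G' p.2) + (((1 / (α * lam)) * en2 p.1 ^ α : ℝ) : EReal)

/-- ε-argmin of an extended-real-valued function. -/
def eArgmin {γ : Type*} (ψ : γ → EReal) (ε : ℝ) : Set γ :=
  {z | ψ z ≠ ⊤ ∧ ψ z ≤ (⨅ w, ψ w) + (ε : EReal)}

/-- Outer limit of a sequence of sets: limits of subsequences of points from the sets. -/
def LimOut {γ : Type*} [TopologicalSpace γ] (C : ℕ → Set γ) : Set γ :=
  {z | ∃ N : ℕ → ℕ, StrictMono N ∧ ∃ zs : ℕ → γ, (∀ k, zs k ∈ C (N k)) ∧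
    Tendsto zs atTop (𝓝 z)}

/-- Epi-convergence of extended-real-valued functions. -/
def EpiConverges {γ : Type*} [TopologicalSpace γ] (fs : ℕ → γ → EReal) (f : γ → EReal) : Prop :=
  ∀ z : γ,
    (∀ zs : ℕ → γ, Tendsto zs atTop (𝓝 z) → f z ≤ liminf (fun ν => fs ν (zs ν)) atTop) ∧
    (∃ zs : ℕ → γ, Tendsto zs atTop (𝓝 z) ∧ limsup (fun ν => fs ν (zs ν)) atTop ≤ f z)

/-- Total variation distance between Borel measures on Ξ. -/
def dTV {d : ℕ} (Ξ : Set (EuclideanSpace ℝ (Fin d)))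
    (μ1 μ2 : Measure (EuclideanSpace ℝ (Fin d))) : ℝ :=
  sSup { r | ∃ f : EuclideanSpace ℝ (Fin d) → ℝ, Measurable f ∧ (∀ ξ ∈ Ξ, |f ξ| ≤ 1) ∧
      r = (∫ ξ in Ξ, f ξ ∂μ1) - (∫ ξ in Ξ, f ξ ∂μ2) }

section Aux

variable {d : ℕ} {Ξ : Set (EuclideanSpace ℝ (Fin d))}

lemma dTV_mem_le (hΞm : MeasurableSet Ξ)
    (μ1 μ2 : Measure (EuclideanSpace ℝ (Fin d)))
    [IsProbabilityMeasure μ1] [IsProbabilityMeasure μ2]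
    {r : ℝ} (hr : r ∈ { r | ∃ f : EuclideanSpace ℝ (Fin d) → ℝ, Measurable f ∧
      (∀ ξ ∈ Ξ, |f ξ| ≤ 1) ∧ r = (∫ ξ in Ξ, f ξ ∂μ1) - (∫ ξ in Ξ, f ξ ∂μ2) }) : r ≤ 2 := by
  obtain ⟨f, hf, hb, rfl⟩ := hr
  have h1 : ∀ (ν : Measure (EuclideanSpace ℝ (Fin d))), IsProbabilityMeasure ν →
      ‖∫ ξ in Ξ, f ξ ∂ν‖ ≤ 1 := by
    intro ν hν
    have h2 := norm_setIntegral_le_of_norm_le_const_ae' (μ := ν) (s := Ξ) (C := 1)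
      (measure_lt_top ν Ξ) (Eventually.of_forall fun ξ hξ => by
        rw [Real.norm_eq_abs]; exact hb ξ hξ)
    have h3 : (ν Ξ).toReal ≤ 1 := by
      have : ν Ξ ≤ 1 := prob_le_one
      simpa using ENNReal.toReal_mono ENNReal.one_ne_top this
    calc ‖∫ ξ in Ξ, f ξ ∂ν‖ ≤ 1 * (ν Ξ).toReal := h2
    _ ≤ 1 := by rw [one_mul]; exact h3
  have a1 := h1 μ1 inferInstance
  have a2 := h1 μ2 inferInstance
  rw [Real.norm_eq_abs, abs_le] at a1 a2
  linarith [a1.2, a2.1]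

lemma dTV_bddAbove (hΞm : MeasurableSet Ξ)
    (μ1 μ2 : Measure (EuclideanSpace ℝ (Fin d)))
    [IsProbabilityMeasure μ1] [IsProbabilityMeasure μ2] :
    BddAbove { r | ∃ f : EuclideanSpace ℝ (Fin d) → ℝ, Measurable f ∧
      (∀ ξ ∈ Ξ, |f ξ| ≤ 1) ∧ r = (∫ ξ in Ξ, f ξ ∂μ1) - (∫ ξ in Ξ, f ξ ∂μ2) } :=
  ⟨2, fun _ hr => dTV_mem_le hΞm μ1 μ2 hr⟩

lemma dTV_nonneg (hΞm : MeasurableSet Ξ)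
    (μ1 μ2 : Measure (EuclideanSpace ℝ (Fin d)))
    [IsProbabilityMeasure μ1] [IsProbabilityMeasure μ2] : 0 ≤ dTV Ξ μ1 μ2 := by
  apply le_csSup (dTV_bddAbove hΞm μ1 μ2)
  exact ⟨fun _ => 0, measurable_const, by simp, by simp⟩

lemma integral_sub_le_mul_dTV (hΞm : MeasurableSet Ξ)
    (μ1 μ2 : Measure (EuclideanSpace ℝ (Fin d)))
    [IsProbabilityMeasure μ1] [IsProbabilityMeasure μ2]
    (h1 : μ1 Ξᶜ = 0) (h2 : μ2 Ξᶜ = 0)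
    {f : EuclideanSpace ℝ (Fin d) → ℝ} (hf : Measurable f) {M : ℝ} (hM : 0 < M)
    (hbd : ∀ ξ ∈ Ξ, |f ξ| ≤ M) :
    (∫ ξ, f ξ ∂μ1) - (∫ ξ, f ξ ∂μ2) ≤ M * dTV Ξ μ1 μ2 := by
  have hres : ∀ (ν : Measure (EuclideanSpace ℝ (Fin d))), ν Ξᶜ = 0 →
      (∫ ξ in Ξ, M⁻¹ * f ξ ∂ν) = M⁻¹ * ∫ ξ, f ξ ∂ν := by
    intro ν hν
    rw [Measure.restrict_eq_self_of_ae_mem (by rwa [← mem_ae_iff] at hν), integral_const_mul]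
  have hmem : (M⁻¹ * ∫ ξ, f ξ ∂μ1) - (M⁻¹ * ∫ ξ, f ξ ∂μ2) ≤ dTV Ξ μ1 μ2 := by
    apply le_csSup (dTV_bddAbove hΞm μ1 μ2)
    refine ⟨fun ξ => M⁻¹ * f ξ, hf.const_mul _, fun ξ hξ => ?_, by rw [hres μ1 h1, hres μ2 h2]⟩
    rw [abs_mul, abs_inv, abs_of_pos hM, inv_mul_le_iff₀ hM, mul_one]
    exact hbd ξ hξ
  calc (∫ ξ, f ξ ∂μ1) - (∫ ξ, f ξ ∂μ2)
      = M * ((M⁻¹ * ∫ ξ, f ξ ∂μ1) - (M⁻¹ * ∫ ξ, f ξ ∂μ2)) := by field_simp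
  _ ≤ M * dTV Ξ μ1 μ2 := mul_le_mul_of_nonneg_left hmem hM.le

lemma abs_integral_sub_le_mul_dTV (hΞm : MeasurableSet Ξ)
    (μ1 μ2 : Measure (EuclideanSpace ℝ (Fin d)))
    [IsProbabilityMeasure μ1] [IsProbabilityMeasure μ2]
    (h1 : μ1 Ξᶜ = 0) (h2 : μ2 Ξᶜ = 0)
    {f : EuclideanSpace ℝ (Fin d) → ℝ} (hf : Measurable f) {M : ℝ} (hM : 0 < M)
    (hbd : ∀ ξ ∈ Ξ, |f ξ| ≤ M) :
    |(∫ ξ, f ξ ∂μ1) - (∫ ξ, f ξ ∂μ2)| ≤ M * dTV Ξ μ1 μ2 := by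
  rw [abs_sub_le_iff]
  constructor
  · exact integral_sub_le_mul_dTV hΞm μ1 μ2 h1 h2 hf hM hbd
  · have := integral_sub_le_mul_dTV hΞm μ1 μ2 h1 h2 hf.neg hM
      (fun ξ hξ => by rw [Pi.neg_apply, abs_neg]; exact hbd ξ hξ)
    simp only [Pi.neg_apply, integral_neg] at this
    linarith


lemma ae_mem_Xi (ν : Measure (EuclideanSpace ℝ (Fin d))) (hν : ν Ξᶜ = 0) :
    ∀ᵐ ξ ∂ν, ξ ∈ Ξ := mem_ae_iff.2 hν

lemma integrable_of_bound_s15 (ν : Measure (EuclideanSpace ℝ (Fin d))) [IsProbabilityMeasure ν]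
    (hν : ν Ξᶜ = 0) {f : EuclideanSpace ℝ (Fin d) → ℝ} (hf : Measurable f)
    {M : ℝ} (hbd : ∀ ξ ∈ Ξ, |f ξ| ≤ M) : Integrable f ν := by
  refine Integrable.mono' (integrable_const M) hf.aestronglyMeasurable ?_
  filter_upwards [ae_mem_Xi ν hν] with ξ hξ
  rw [Real.norm_eq_abs]; exact hbd ξ hξ

lemma abs_integral_le (ν : Measure (EuclideanSpace ℝ (Fin d))) [IsProbabilityMeasure ν]
    (hν : ν Ξᶜ = 0) {f : EuclideanSpace ℝ (Fin d) → ℝ} (hf : Measurable f)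
    {M : ℝ} (hbd : ∀ ξ ∈ Ξ, |f ξ| ≤ M) : |∫ ξ, f ξ ∂ν| ≤ M := by
  have := norm_integral_le_of_norm_le_const (μ := ν) (f := f) (C := M) (by
    filter_upwards [ae_mem_Xi ν hν] with ξ hξ
    rw [Real.norm_eq_abs]; exact hbd ξ hξ)
  simpa [Real.norm_eq_abs] using this

lemma integral_ge_neg (ν : Measure (EuclideanSpace ℝ (Fin d))) [IsProbabilityMeasure ν]
    (hν : ν Ξᶜ = 0) {f : EuclideanSpace ℝ (Fin d) → ℝ} (hf : Measurable f)
    {M : ℝ} (hbd : ∀ ξ ∈ Ξ, |f ξ| ≤ M) : -M ≤ ∫ ξ, f ξ ∂ν := by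
  have := abs_integral_le ν hν hf hbd
  rw [abs_le] at this; exact this.1

/-- Fatou-type lemma: eventual strict lower bound on integrals along a sequence. -/
lemma eventually_lt_integral (ν : Measure (EuclideanSpace ℝ (Fin d))) [IsProbabilityMeasure ν]
    (hν : ν Ξᶜ = 0)
    (F : ℕ → EuclideanSpace ℝ (Fin d) → ℝ) (F0 : EuclideanSpace ℝ (Fin d) → ℝ)
    (hmeas : ∀ k, Measurable (F k)) (hmeas0 : Measurable F0)
    {M : ℝ} (hM : 0 < M) (hbd : ∀ᶠ k in atTop, ∀ ξ ∈ Ξ, |F k ξ| ≤ M)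
    (hbd0 : ∀ ξ ∈ Ξ, |F0 ξ| ≤ M)
    (hlim : ∀ ξ ∈ Ξ, ∀ c : ℝ, c < F0 ξ → ∀ᶠ k in atTop, c < F k ξ)
    {t : ℝ} (ht : t < ∫ ξ, F0 ξ ∂ν) : ∀ᶠ k in atTop, t < ∫ ξ, F k ξ ∂ν := by
  rcases lt_or_ge t (-M) with htM | htM
  · filter_upwards [hbd] with k hk
    exact htM.trans_le (integral_ge_neg ν hν (hmeas k) hk)
  -- main case : 0 ≤ t + M
  have hconv : ∀ (g : EuclideanSpace ℝ (Fin d) → ℝ), Measurable g → (∀ ξ ∈ Ξ, |g ξ| ≤ M) →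
      (∫⁻ ξ, ENNReal.ofReal (g ξ + M) ∂ν) = ENNReal.ofReal ((∫ ξ, g ξ ∂ν) + M) := by
    intro g hg hgbd
    have hint : Integrable (fun ξ => g ξ + M) ν :=
      (integrable_of_bound_s15 ν hν hg hgbd).add (integrable_const M)
    have hnn : 0 ≤ᵐ[ν] fun ξ => g ξ + M := by
      filter_upwards [ae_mem_Xi ν hν] with ξ hξ
      have := (abs_le.1 (hgbd ξ hξ)).1
      simp only [Pi.zero_apply]; linarith
    rw [← ofReal_integral_eq_lintegral_ofReal hint hnn,
      integral_add (integrable_of_bound_s15 ν hν hg hgbd) (integrable_const M), integral_const]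
    simp
  have hpt : ∀ ξ ∈ Ξ, ENNReal.ofReal (F0 ξ + M) ≤
      liminf (fun k => ENNReal.ofReal (F k ξ + M)) atTop := by
    intro ξ hξ
    rw [le_liminf_iff]
    intro b hb
    have hbtop : b ≠ ⊤ := hb.ne_top
    rcases ENNReal.lt_iff_exists_real_btwn.1 hb with ⟨c, hc0, hbc, hcF⟩
    have hcF' : c - M < F0 ξ := by
      have hpos : (0:ℝ) < F0 ξ + M := ENNReal.ofReal_pos.1 (lt_of_le_of_lt (zero_le : 0 ≤ b) hb)
      have := (ENNReal.ofReal_lt_ofReal_iff hpos).1 hcF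
      linarith
    filter_upwards [hlim ξ hξ (c - M) hcF'] with k hk
    calc b < ENNReal.ofReal c := hbc
    _ ≤ ENNReal.ofReal (F k ξ + M) := ENNReal.ofReal_le_ofReal (by linarith)
  have hae : (fun ξ => ENNReal.ofReal (F0 ξ + M)) ≤ᵐ[ν]
      fun ξ => liminf (fun k => ENNReal.ofReal (F k ξ + M)) atTop := by
    filter_upwards [ae_mem_Xi ν hν] with ξ hξ using hpt ξ hξ
  have hFatou := lintegral_liminf_le
    (fun k => ((hmeas k).add_const M).ennreal_ofReal) (μ := ν) (u := atTop)
  have hchain : ENNReal.ofReal ((∫ ξ, F0 ξ ∂ν) + M) ≤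
      liminf (fun k => ∫⁻ ξ, ENNReal.ofReal (F k ξ + M) ∂ν) atTop := by
    rw [← hconv F0 hmeas0 hbd0]
    exact le_trans (lintegral_mono_ae hae) hFatou
  have hlt : ENNReal.ofReal (t + M) < ENNReal.ofReal ((∫ ξ, F0 ξ ∂ν) + M) := by
    apply ENNReal.ofReal_lt_ofReal_iff_of_nonneg (by linarith) |>.2
    linarith
  filter_upwards [eventually_lt_of_lt_liminf (hlt.trans_le hchain), hbd] with k hk hbk
  rw [hconv (F k) (hmeas k) hbk] at hk
  have h0 : (0:ℝ) ≤ t + M := by linarith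
  have := (ENNReal.ofReal_lt_ofReal_iff_of_nonneg h0).1 hk
  linarith


lemma lsc_le_liminf {γ : Type*} [TopologicalSpace γ] {f : γ → EReal} (hf : LowerSemicontinuous f)
    {xs : ℕ → γ} {x : γ} (hx : Tendsto xs atTop (𝓝 x)) :
    f x ≤ liminf (fun k => f (xs k)) atTop := by
  rw [le_liminf_iff]
  intro y hy
  exact hx.eventually (hf x y hy)

lemma lsc_bddBelow_on_compact {γ : Type*} [TopologicalSpace γ] {f : γ → EReal}
    (hf : LowerSemicontinuous f) (hbot : ∀ v, f v ≠ ⊥) {K : Set γ} (hK : IsCompact K) :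
    ∃ c : ℝ, ∀ v ∈ K, (c : EReal) ≤ f v := by
  have hnb : ∀ v : γ, ∃ c : ℝ, (c : EReal) < f v := by
    intro v
    rcases EReal.lt_iff_exists_real_btwn.1 (bot_lt_iff_ne_bot.2 (hbot v)) with ⟨c, _, hc⟩
    exact ⟨c, hc⟩
  choose c hc using hnb
  have hcover := hK.elim_nhds_subcover (fun v => {w | (c v : EReal) < f w})
    (fun v _ => hf.lowerSemicontinuousAt v (c v) (hc v))
  rcases hcover with ⟨t, _, ht⟩
  rcases t.eq_empty_or_nonempty with rfl | htne
  · exact ⟨0, fun v hv => absurd (ht hv) (by simp)⟩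
  refine ⟨t.inf' htne c, fun v hv => ?_⟩
  rcases Set.mem_iUnion₂.1 (ht hv) with ⟨w, hw, hvw⟩
  calc ((t.inf' htne c : ℝ) : EReal) ≤ (c w : EReal) :=
        EReal.coe_le_coe_iff.2 (Finset.inf'_le c hw)
  _ ≤ f v := (hvw : (c w : EReal) < f v).le

lemma en2_nonneg {m : ℕ} (u : Fin m → ℝ) : 0 ≤ en2 u := Real.sqrt_nonneg _

lemma en2_zero {m : ℕ} : en2 (0 : Fin m → ℝ) = 0 := by simp [en2]

lemma en2_continuous {m : ℕ} : Continuous (en2 (m := m)) :=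
  Real.continuous_sqrt.comp (continuous_finset_sum _ fun i _ => (continuous_apply i).pow 2)

lemma en2_pos {m : ℕ} {u : Fin m → ℝ} (hu : u ≠ 0) : 0 < en2 u := by
  apply Real.sqrt_pos.2
  obtain ⟨i, hi⟩ : ∃ i, u i ≠ 0 := by
    by_contra hcon
    push_neg at hcon
    exact hu (funext hcon)
  exact Finset.sum_pos' (fun j _ => sq_nonneg _) ⟨i, Finset.mem_univ i, by positivity⟩

lemma en2_le {m : ℕ} {u : Fin m → ℝ} {b : ℝ} (hb : 0 ≤ b) (h : ∀ i, |u i| ≤ b) :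
    en2 u ≤ Real.sqrt m * b := by
  have h1 : en2 u ≤ Real.sqrt (∑ _i : Fin m, b ^ 2) := by
    apply Real.sqrt_le_sqrt
    apply Finset.sum_le_sum
    intro i _
    exact sq_le_sq' (by linarith [(abs_le.1 (h i)).1]) (abs_le.1 (h i)).2
  calc en2 u ≤ Real.sqrt (∑ _i : Fin m, b ^ 2) := h1
  _ = Real.sqrt m * b := by
      rw [Finset.sum_const, Finset.card_fin, nsmul_eq_mul,
        Real.sqrt_mul (Nat.cast_nonneg m), Real.sqrt_sq hb]

lemma ereal_add_ne_bot {a b : EReal} (ha : a ≠ ⊥) (hb : b ≠ ⊥) : a + b ≠ ⊥ := by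
  simp [EReal.add_eq_bot_iff, ha, hb]


lemma ereal_le_of_forall_add {a c : EReal} (hc : ∀ η : ℝ, 0 < η → a ≤ c + (η : EReal)) :
    a ≤ c := by
  by_contra hlt
  push_neg at hlt
  rcases EReal.lt_iff_exists_real_btwn.1 hlt with ⟨t, hct, hta⟩
  rcases eq_or_ne c ⊥ with rfl | hcb
  · have h1 := hc 1 one_pos
    rw [EReal.bot_add] at h1
    exact absurd ((bot_lt_iff_ne_bot.2 (by rintro rfl; exact absurd hta (by simp))).trans_le
      h1) (lt_irrefl _)
  · have hct2 : c ≠ ⊤ := (hct.trans (EReal.coe_lt_top t)).ne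
    set cr := c.toReal with hcrdef
    have hcoe : c = (cr : EReal) := (EReal.coe_toReal hct2 hcb).symm
    have hη : 0 < t - cr := by
      have h2 : (cr : EReal) < (t : EReal) := hcoe ▸ hct
      exact sub_pos.2 (EReal.coe_lt_coe_iff.1 h2)
    have h3 := hc (t - cr) hη
    rw [hcoe, ← EReal.coe_add] at h3
    have h4 : a ≤ (t : EReal) := by
      convert h3 using 2
      ring
    exact absurd (hta.trans_le h4) (lt_irrefl _)

lemma ereal_tendsto_add_coe {A : EReal} (hA : A ≠ ⊥) {p : ℕ → ℝ} (hp : Tendsto p atTop (𝓝 0)) :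
    Tendsto (fun k => A + (p k : EReal)) atTop (𝓝 A) := by
  rcases eq_or_ne A ⊤ with rfl | hA2
  · simpa [EReal.top_add_coe] using tendsto_const_nhds (α := ℕ) (f := atTop) (a := (⊤ : EReal))
  · rw [← EReal.coe_toReal hA2 hA]
    simp only [← EReal.coe_add]
    exact EReal.tendsto_coe.2 (by simpa using tendsto_const_nhds.add hp)

end Aux

section Main

variable {d n m : ℕ}
  {Ξ : Set (EuclideanSpace ℝ (Fin d))}
  (μ : Measure (EuclideanSpace ℝ (Fin d))) [IsProbabilityMeasure μ]
  (μs : ℕ → Measure (EuclideanSpace ℝ (Fin d))) [∀ ν, IsProbabilityMeasure (μs ν)]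
  (g0 : EuclideanSpace ℝ (Fin n) → EReal)
  (h : (Fin m → ℝ) → EReal)
  (G : EuclideanSpace ℝ (Fin d) → EuclideanSpace ℝ (Fin n) → Fin m → ℝ)
  (α : ℝ) (lam : ℕ → ℝ)

lemma rock_zero (x : EuclideanSpace ℝ (Fin n)) :
    rock g0 h μ G (0, x) = phiFun g0 h μ G x := by
  simp [rock, phiFun]

lemma rock_ne_zero (hg0bot : ∀ x, g0 x ≠ ⊥) (hhbot : ∀ u, h u ≠ ⊥)
    {u : Fin m → ℝ} (hu : u ≠ 0) (x : EuclideanSpace ℝ (Fin n)) :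
    rock g0 h μ G (u, x) = ⊤ := by
  simp only [rock, if_neg hu]
  exact EReal.add_top_of_ne_bot (ereal_add_ne_bot (hg0bot _) (hhbot _))

lemma inf_rock_eq (hg0bot : ∀ x, g0 x ≠ ⊥) (hhbot : ∀ u, h u ≠ ⊥) :
    (⨅ q, rock g0 h μ G q) = ⨅ x, phiFun g0 h μ G x := by
  apply le_antisymm
  · exact le_iInf fun x => iInf_le_of_le (0, x) (rock_zero μ g0 h G x).le
  · apply le_iInf
    rintro ⟨u, x⟩
    rcases eq_or_ne u 0 with rfl | hu
    · rw [rock_zero μ g0 h G x]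
      exact iInf_le _ _
    · rw [rock_ne_zero μ g0 h G hg0bot hhbot hu x]
      exact le_top

lemma G_meas_left (hGmeas : ∀ i, Measurable fun q :
      EuclideanSpace ℝ (Fin d) × EuclideanSpace ℝ (Fin n) => G q.1 q.2 i)
    (y : EuclideanSpace ℝ (Fin n)) (i : Fin m) : Measurable fun ξ => G ξ y i :=
  (hGmeas i).comp (measurable_id.prodMk measurable_const)

/-- Recovery sequence at a point `x`. -/
lemma recovery
    (hGmeas : ∀ i, Measurable fun q :
      EuclideanSpace ℝ (Fin d) × EuclideanSpace ℝ (Fin n) => G q.1 q.2 i)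
    (hGbd : ∀ x, ∃ ε > 0, ∃ M : ℝ, ∀ ξ ∈ Ξ, ∀ y ∈ closedBall x ε, ∀ i, |G ξ y i| ≤ M)
    (hg0bot : ∀ x, g0 x ≠ ⊥) (hhbot : ∀ u, h u ≠ ⊥)
    (hΞcl : IsClosed Ξ) (hμΞ : μ Ξᶜ = 0) (hμsΞ : ∀ ν, μs ν Ξᶜ = 0)
    (hα : 1 ≤ α) (hlam : ∀ ν, 0 < lam ν)
    (hd : Tendsto (fun ν => dTV Ξ (μs ν) μ) atTop (𝓝 0))
    (hrate : Tendsto (fun ν => (1 / lam ν) * dTV Ξ (μs ν) μ ^ α) atTop (𝓝 0))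
    (N : ℕ → ℕ) (hN : Tendsto N atTop atTop) (x : EuclideanSpace ℝ (Fin n)) :
    ∃ us : ℕ → (Fin m → ℝ), Tendsto us atTop (𝓝 0) ∧
      Tendsto (fun k => rockApprox g0 h (μs (N k)) G α (lam (N k)) (us k, x)) atTop
        (𝓝 (phiFun g0 h μ G x)) := by
  have hΞm : MeasurableSet Ξ := hΞcl.measurableSet
  obtain ⟨ε, hε, M0, hM0⟩ := hGbd x
  set M := max M0 1 with hMdef
  have hMpos : (0:ℝ) < M := lt_of_lt_of_le one_pos (le_max_right _ _)
  have hMbd : ∀ ξ ∈ Ξ, ∀ i, |G ξ x i| ≤ M := fun ξ hξ i =>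
    (hM0 ξ hξ x (mem_closedBall_self hε.le) i).trans (le_max_left _ _)
  set δ : ℕ → ℝ := fun k => dTV Ξ (μs (N k)) μ with hδdef
  have hδ0 : ∀ k, 0 ≤ δ k := fun k => dTV_nonneg hΞm _ _
  have hdN : Tendsto δ atTop (𝓝 0) := hd.comp hN
  set us : ℕ → Fin m → ℝ := fun k i => EV μ G x i - EV (μs (N k)) G x i with husdef
  have husbd : ∀ k i, |us k i| ≤ M * δ k := by
    intro k i
    have h2 := abs_integral_sub_le_mul_dTV hΞm (μs (N k)) μ (hμsΞ _) hμΞ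
      (G_meas_left G hGmeas x i) hMpos (fun ξ hξ => hMbd ξ hξ i)
    have h3 : us k i = -((∫ ξ, G ξ x i ∂(μs (N k))) - ∫ ξ, G ξ x i ∂μ) := by
      simp [husdef, EV]
    rw [h3, abs_neg]
    exact h2
  have hus0 : Tendsto us atTop (𝓝 0) := by
    rw [tendsto_pi_nhds]
    intro i
    apply squeeze_zero_norm (fun k => (husbd k i).trans_eq rfl)
    simpa using hdN.const_mul M
  refine ⟨us, hus0, ?_⟩
  have harg : ∀ k, us k + EV (μs (N k)) G x = EV μ G x := by
    intro k
    funext i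
    simp [husdef]
  set pen : ℕ → ℝ := fun k => 1 / (α * lam (N k)) * en2 (us k) ^ α with hpendef
  have hαpos : (0:ℝ) < α := lt_of_lt_of_le one_pos hα
  have hcoef : ∀ k, (0:ℝ) ≤ 1 / (α * lam (N k)) := fun k =>
    div_nonneg one_pos.le (mul_pos hαpos (hlam _)).le
  have hpen_nonneg : ∀ k, 0 ≤ pen k := fun k =>
    mul_nonneg (hcoef k) (Real.rpow_nonneg (en2_nonneg _) _)
  have hpen_le : ∀ k, pen k ≤ ((Real.sqrt m * M) ^ α / α) * ((1 / lam (N k)) * δ k ^ α) := by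
    intro k
    have h1 : en2 (us k) ≤ Real.sqrt m * (M * δ k) :=
      en2_le (mul_nonneg hMpos.le (hδ0 k)) (husbd k)
    have h2 : en2 (us k) ^ α ≤ (Real.sqrt m * M) ^ α * δ k ^ α := by
      calc en2 (us k) ^ α ≤ (Real.sqrt m * (M * δ k)) ^ α :=
            Real.rpow_le_rpow (en2_nonneg _) h1 hαpos.le
      _ = (Real.sqrt m * M) ^ α * δ k ^ α := by
          rw [← mul_assoc, ← Real.mul_rpow (by positivity) (hδ0 k)]
    calc pen k ≤ 1 / (α * lam (N k)) * ((Real.sqrt m * M) ^ α * δ k ^ α) :=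
          mul_le_mul_of_nonneg_left h2 (hcoef k)
    _ = ((Real.sqrt m * M) ^ α / α) * ((1 / lam (N k)) * δ k ^ α) := by
          have hα0 : α ≠ 0 := hαpos.ne'
          have hl0 : lam (N k) ≠ 0 := (hlam (N k)).ne'
          field_simp
  have hpen0 : Tendsto pen atTop (𝓝 0) := by
    apply squeeze_zero hpen_nonneg hpen_le
    simpa using (hrate.comp hN).const_mul ((Real.sqrt m * M) ^ α / α)
  have hA : (g0 x + h (EV μ G x)) ≠ ⊥ := ereal_add_ne_bot (hg0bot _) (hhbot _)
  have := ereal_tendsto_add_coe hA hpen0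
  have heq : (fun k => rockApprox g0 h (μs (N k)) G α (lam (N k)) (us k, x)) =
      fun k => (g0 x + h (EV μ G x)) + (pen k : EReal) := by
    funext k
    simp only [rockApprox, harg k, hpendef]
  rw [heq]
  exact this


lemma limsup_inf_le
    (hGmeas : ∀ i, Measurable fun q :
      EuclideanSpace ℝ (Fin d) × EuclideanSpace ℝ (Fin n) => G q.1 q.2 i)
    (hGbd : ∀ x, ∃ ε > 0, ∃ M : ℝ, ∀ ξ ∈ Ξ, ∀ y ∈ closedBall x ε, ∀ i, |G ξ y i| ≤ M)
    (hg0bot : ∀ x, g0 x ≠ ⊥) (hhbot : ∀ u, h u ≠ ⊥)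
    (hΞcl : IsClosed Ξ) (hμΞ : μ Ξᶜ = 0) (hμsΞ : ∀ ν, μs ν Ξᶜ = 0)
    (hα : 1 ≤ α) (hlam : ∀ ν, 0 < lam ν)
    (hd : Tendsto (fun ν => dTV Ξ (μs ν) μ) atTop (𝓝 0))
    (hrate : Tendsto (fun ν => (1 / lam ν) * dTV Ξ (μs ν) μ ^ α) atTop (𝓝 0))
    (hargmin : ∃ x, phiFun g0 h μ G x ≠ ⊤ ∧ phiFun g0 h μ G x = ⨅ y, phiFun g0 h μ G y)
    (N : ℕ → ℕ) (hN : Tendsto N atTop atTop) :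
    limsup (fun k => ⨅ q, rockApprox g0 h (μs (N k)) G α (lam (N k)) q) atTop ≤
      ⨅ q, rock g0 h μ G q := by
  obtain ⟨xs, hxtop, hxmin⟩ := hargmin
  obtain ⟨us, -, htend⟩ := recovery μ μs g0 h G α lam hGmeas hGbd hg0bot hhbot hΞcl hμΞ hμsΞ
    hα hlam hd hrate N hN xs
  have h1 : limsup (fun k => ⨅ q, rockApprox g0 h (μs (N k)) G α (lam (N k)) q) atTop ≤
      limsup (fun k => rockApprox g0 h (μs (N k)) G α (lam (N k)) (us k, xs)) atTop :=
    limsup_le_limsup (Eventually.of_forall fun k => iInf_le _ _)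
  rw [htend.limsup_eq] at h1
  rw [inf_rock_eq μ g0 h G hg0bot hhbot, ← hxmin]
  exact h1

lemma liminf_key
    (hGmeas : ∀ i, Measurable fun q :
      EuclideanSpace ℝ (Fin d) × EuclideanSpace ℝ (Fin n) => G q.1 q.2 i)
    (hGlsc : ∀ ξ i, LowerSemicontinuous fun x => G ξ x i)
    (hGbd : ∀ x, ∃ ε > 0, ∃ M : ℝ, ∀ ξ ∈ Ξ, ∀ y ∈ closedBall x ε, ∀ i, |G ξ y i| ≤ M)
    (hg0lsc : LowerSemicontinuous g0) (hg0bot : ∀ x, g0 x ≠ ⊥)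
    (hhlsc : LowerSemicontinuous h) (hhbot : ∀ u, h u ≠ ⊥)
    (hhmono : ∀ u v : Fin m → ℝ, (∀ i, u i ≤ v i) → h u ≤ h v)
    (hΞcl : IsClosed Ξ) (hμΞ : μ Ξᶜ = 0) (hμsΞ : ∀ ν, μs ν Ξᶜ = 0)
    (hα : 1 ≤ α) (hlam : ∀ ν, 0 < lam ν) (hlam0 : Tendsto lam atTop (𝓝 0))
    (hd : Tendsto (fun ν => dTV Ξ (μs ν) μ) atTop (𝓝 0))
    (N : ℕ → ℕ) (hN : Tendsto N atTop atTop)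
    (z : (Fin m → ℝ) × EuclideanSpace ℝ (Fin n))
    (zs : ℕ → (Fin m → ℝ) × EuclideanSpace ℝ (Fin n))
    (hzs : Tendsto zs atTop (𝓝 z)) :
    rock g0 h μ G z ≤
      liminf (fun k => rockApprox g0 h (μs (N k)) G α (lam (N k)) (zs k)) atTop := by
  have hΞm : MeasurableSet Ξ := hΞcl.measurableSet
  obtain ⟨u, x⟩ := z
  have hxs : Tendsto (fun k => (zs k).2) atTop (𝓝 x) := (continuous_snd.tendsto _).comp hzs
  have hus : Tendsto (fun k => (zs k).1) atTop (𝓝 u) := (continuous_fst.tendsto _).comp hzs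
  have hαpos : (0:ℝ) < α := lt_of_lt_of_le one_pos hα
  obtain ⟨ε, hε, M0, hM0⟩ := hGbd x
  set M := max M0 1 with hMdef
  have hMpos : (0:ℝ) < M := lt_of_lt_of_le one_pos (le_max_right _ _)
  have hMbd : ∀ ξ ∈ Ξ, ∀ y ∈ closedBall x ε, ∀ i, |G ξ y i| ≤ M := fun ξ hξ y hy i =>
    (hM0 ξ hξ y hy i).trans (le_max_left _ _)
  have hball : ∀ᶠ k in atTop, (zs k).2 ∈ closedBall x ε :=
    hxs.eventually (closedBall_mem_nhds x hε)
  set δ : ℕ → ℝ := fun k => dTV Ξ (μs (N k)) μ with hδdef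
  have hδ0 : ∀ k, 0 ≤ δ k := fun k => dTV_nonneg hΞm _ _
  have hdN : Tendsto δ atTop (𝓝 0) := hd.comp hN
  have hEVs_bd : ∀ᶠ k in atTop, ∀ i, |EV (μs (N k)) G (zs k).2 i| ≤ M := by
    filter_upwards [hball] with k hk i
    exact abs_integral_le (μs (N k)) (hμsΞ _) (G_meas_left G hGmeas _ i)
      (fun ξ hξ => hMbd ξ hξ _ hk i)
  have hEVdiff : ∀ᶠ k in atTop, ∀ i,
      |EV (μs (N k)) G (zs k).2 i - EV μ G (zs k).2 i| ≤ M * δ k := by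
    filter_upwards [hball] with k hk i
    exact abs_integral_sub_le_mul_dTV hΞm (μs (N k)) μ (hμsΞ _) hμΞ
      (G_meas_left G hGmeas _ i) hMpos (fun ξ hξ => hMbd ξ hξ _ hk i)
  set v : ℕ → Fin m → ℝ := fun k => (zs k).1 + EV (μs (N k)) G (zs k).2 with hvdef
  -- Claim C : componentwise asymptotic lower bound for the shifted arguments
  have claimC : ∀ i : Fin m, ∀ s : ℝ, s < u i + EV μ G x i → ∀ᶠ k in atTop, s < v k i := by
    intro i s hs
    set r := EV μ G x i with hrdef
    set t := (s - u i + r) / 2 with htdef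
    have hsu : s - u i < r := by linarith
    have hts : s - u i < t := by rw [htdef]; linarith
    have htr : t < r := by rw [htdef]; linarith
    have hFatou : ∀ᶠ k in atTop, t < EV μ G (zs k).2 i := by
      apply eventually_lt_integral μ hμΞ (fun k ξ => G ξ (zs k).2 i) (fun ξ => G ξ x i)
        (fun k => G_meas_left G hGmeas _ i) (G_meas_left G hGmeas x i) hMpos ?_
        (fun ξ hξ => hMbd ξ hξ x (mem_closedBall_self hε.le) i) ?_ htr
      · filter_upwards [hball] with k hk ξ hξ
        exact hMbd ξ hξ _ hk i
      · intro ξ hξ c hc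
        exact hxs.eventually ((hGlsc ξ i) x c hc)
    set θ := (t - (s - u i)) / 2 with hθdef
    have hθpos : 0 < θ := by rw [hθdef]; linarith
    have h1 : ∀ᶠ k in atTop, u i - θ < (zs k).1 i := by
      have ht1 : Tendsto (fun k => (zs k).1 i) atTop (𝓝 (u i)) :=
        ((continuous_apply i).tendsto u).comp hus
      exact ht1.eventually (eventually_gt_nhds (by linarith))
    have h2 : ∀ᶠ k in atTop, M * δ k < θ := by
      have ht2 : Tendsto (fun k => M * δ k) atTop (𝓝 0) := by simpa using hdN.const_mul M
      exact ht2.eventually (eventually_lt_nhds hθpos)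
    filter_upwards [hFatou, hEVdiff, h1, h2] with k hF hE h1k h2k
    have hvk : v k i = (zs k).1 i + EV (μs (N k)) G (zs k).2 i := rfl
    have hEi := abs_le.1 (hE i)
    have hθ2 : t - 2 * θ = s - u i := by rw [hθdef]; ring
    rw [hvk]
    have := hEi.1
    linarith
  -- eventual boundedness of `v`
  set C : ℝ := ‖u‖ + 1 + M with hCdef
  have hC0 : (0:ℝ) ≤ C := by positivity
  have hu1 : ∀ᶠ k in atTop, (zs k).1 ∈ closedBall u 1 :=
    hus.eventually (closedBall_mem_nhds u one_pos)
  have hvK : ∀ᶠ k in atTop, v k ∈ closedBall (0 : Fin m → ℝ) C := by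
    filter_upwards [hu1, hEVs_bd] with k hk1 hk2
    rw [mem_closedBall_zero_iff]
    apply pi_norm_le_iff_of_nonneg hC0 |>.2
    intro i
    have hui : |(zs k).1 i| ≤ ‖u‖ + 1 := by
      have h3 : |(zs k).1 i - u i| ≤ 1 := by
        calc |(zs k).1 i - u i| ≤ ‖(zs k).1 - u‖ := by
              simpa using norm_le_pi_norm ((zs k).1 - u) i
        _ ≤ 1 := by rwa [Metric.mem_closedBall, dist_eq_norm] at hk1
      have h4 : |u i| ≤ ‖u‖ := by simpa using norm_le_pi_norm u i
      have := abs_sub_abs_le_abs_sub ((zs k).1 i) (u i)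
      linarith
    have hvk : v k i = (zs k).1 i + EV (μs (N k)) G (zs k).2 i := rfl
    rw [Real.norm_eq_abs, hvk, hCdef]
    calc |(zs k).1 i + EV (μs (N k)) G (zs k).2 i|
        ≤ |(zs k).1 i| + |EV (μs (N k)) G (zs k).2 i| := abs_add_le _ _
    _ ≤ ‖u‖ + 1 + M := by linarith [hk2 i]
  rcases eq_or_ne u 0 with rfl | hu
  · -- u = 0 : the finite case
    rw [rock_zero μ g0 h G x]
    have hpen_nonneg : ∀ k, (0:EReal) ≤
        ((1 / (α * lam (N k)) * en2 ((zs k).1) ^ α : ℝ) : EReal) := by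
      intro k
      apply EReal.coe_nonneg.2
      exact mul_nonneg (div_nonneg one_pos.le (mul_pos hαpos (hlam _)).le)
        (Real.rpow_nonneg (en2_nonneg _) _)
    have step1 : liminf (fun k => g0 (zs k).2 + h (v k)) atTop ≤
        liminf (fun k => rockApprox g0 h (μs (N k)) G α (lam (N k)) (zs k)) atTop := by
      exact liminf_le_liminf (Eventually.of_forall fun k =>
        le_add_of_nonneg_right (hpen_nonneg k))
    have step2 : liminf (fun k => g0 (zs k).2) atTop + liminf (fun k => h (v k)) atTop ≤
        liminf (fun k => g0 (zs k).2 + h (v k)) atTop := EReal.le_liminf_add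
    have step3 : g0 x ≤ liminf (fun k => g0 (zs k).2) atTop := lsc_le_liminf hg0lsc hxs
    have step4 : h (EV μ G x) ≤ liminf (fun k => h (v k)) atTop := by
      rw [le_liminf_iff]
      intro b hb
      by_contra hcon
      rw [Filter.not_eventually] at hcon
      have hfreq : ∃ᶠ k in atTop, h (v k) ≤ b := hcon.mono fun k hk => not_lt.1 hk
      have hfreq2 : ∃ᶠ k in atTop, h (v k) ≤ b ∧ v k ∈ closedBall (0 : Fin m → ℝ) C :=
        hfreq.and_eventually hvK
      obtain ⟨φ, hφ, hφP⟩ := extraction_of_frequently_atTop hfreq2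
      obtain ⟨w, -, ψ, hψ, hwlim⟩ := tendsto_subseq_of_bounded
        (Metric.isBounded_closedBall (x := (0 : Fin m → ℝ)) (r := C)) (fun j => (hφP j).2)
      have hcomp : Tendsto (fun j => v (φ (ψ j))) atTop (𝓝 w) := hwlim
      have hφψ : Tendsto (fun j => φ (ψ j)) atTop atTop := (hφ.comp hψ).tendsto_atTop
      have hwge : ∀ i, EV μ G x i ≤ w i := by
        intro i
        by_contra hwi
        push_neg at hwi
        set s := (w i + EV μ G x i) / 2 with hsdef
        have hs1 : w i < s := by rw [hsdef]; linarith
        have hs2 : s < EV μ G x i := by rw [hsdef]; linarith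
        have hev := claimC i s (by simpa using hs2)
        have hev2 := hφψ.eventually hev
        have hle : s ≤ w i :=
          ge_of_tendsto (((continuous_apply i).tendsto w).comp hcomp)
            (hev2.mono fun j hj => hj.le)
        linarith
      have hhw : b < h w := lt_of_lt_of_le hb (hhmono _ _ hwge)
      obtain ⟨j, hj⟩ := (hcomp.eventually ((hhlsc w) b hhw)).exists
      exact absurd (hφP (ψ j)).1 (not_le.2 hj)
    calc phiFun g0 h μ G x = g0 x + h (EV μ G x) := rfl
    _ ≤ liminf (fun k => g0 (zs k).2) atTop + liminf (fun k => h (v k)) atTop :=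
        add_le_add step3 step4
    _ ≤ liminf (fun k => g0 (zs k).2 + h (v k)) atTop := step2
    _ ≤ _ := step1
  · -- u ≠ 0 : penalty blows up
    rw [rock_ne_zero μ g0 h G hg0bot hhbot hu x]
    obtain ⟨c2, hc2⟩ := lsc_bddBelow_on_compact hhlsc hhbot
      (isCompact_closedBall (0 : Fin m → ℝ) C)
    obtain ⟨c1, -, hc1⟩ := EReal.lt_iff_exists_real_btwn.1 (bot_lt_iff_ne_bot.2 (hg0bot x))
    have hg0ev : ∀ᶠ k in atTop, (c1 : EReal) < g0 (zs k).2 := hxs.eventually (hg0lsc x c1 hc1)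
    have hhev : ∀ᶠ k in atTop, (c2 : EReal) ≤ h (v k) := hvK.mono fun k hk => hc2 _ hk
    set pen : ℕ → ℝ := fun k => 1 / (α * lam (N k)) * en2 ((zs k).1) ^ α with hpendef
    have hen : Tendsto (fun k => en2 ((zs k).1)) atTop (𝓝 (en2 u)) :=
      (en2_continuous.tendsto u).comp hus
    have hen2pos : 0 < en2 u := en2_pos hu
    have henev : ∀ᶠ k in atTop, en2 u / 2 < en2 ((zs k).1) :=
      hen.eventually (eventually_gt_nhds (half_lt_self hen2pos))
    have hinvlam : Tendsto (fun k => (lam (N k))⁻¹) atTop atTop := by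
      apply tendsto_inv_nhdsGT_zero.comp
      apply tendsto_nhdsWithin_of_tendsto_nhds_of_eventually_within _ (hlam0.comp hN)
      exact Eventually.of_forall fun k => hlam (N k)
    set b0 : ℝ := (1 / α) * (en2 u / 2) ^ α with hb0def
    have hb0pos : 0 < b0 :=
      mul_pos (by positivity) (Real.rpow_pos_of_pos (by positivity) _)
    have hblow : Tendsto (fun k => b0 * (lam (N k))⁻¹) atTop atTop :=
      hinvlam.const_mul_atTop hb0pos
    have hpen_ge : ∀ᶠ k in atTop, b0 * (lam (N k))⁻¹ ≤ pen k := by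
      filter_upwards [henev] with k hk
      have h5 : (en2 u / 2) ^ α ≤ en2 ((zs k).1) ^ α :=
        Real.rpow_le_rpow (by positivity) hk.le hαpos.le
      have h6 : pen k = (1 / α) * (lam (N k))⁻¹ * en2 ((zs k).1) ^ α := by
        rw [hpendef]
        field_simp
      rw [h6, hb0def]
      have h7 : (0:ℝ) ≤ (1 / α) * (lam (N k))⁻¹ := by
        have := (hlam (N k)).le
        positivity
      calc 1 / α * (en2 u / 2) ^ α * (lam (N k))⁻¹
          ≤ 1 / α * en2 ((zs k).1) ^ α * (lam (N k))⁻¹ := by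
            apply mul_le_mul_of_nonneg_right _ (inv_nonneg.2 (hlam (N k)).le)
            exact mul_le_mul_of_nonneg_left h5 (by positivity)
      _ = 1 / α * (lam (N k))⁻¹ * en2 ((zs k).1) ^ α := by ring
    have hpentop : Tendsto pen atTop atTop := tendsto_atTop_mono' atTop hpen_ge hblow
    set wseq : ℕ → ℝ := fun k => c1 + c2 + pen k with hwdef
    have hwtop : Tendsto wseq atTop atTop := by
      apply tendsto_atTop_add_const_left
      exact hpentop
    have hwtope : Tendsto (fun k => ((wseq k : ℝ) : EReal)) atTop (𝓝 ⊤) := by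
      rw [EReal.tendsto_nhds_top_iff_real]
      intro r
      filter_upwards [hwtop.eventually_gt_atTop r] with k hk
      exact EReal.coe_lt_coe_iff.2 hk
    have hle : ∀ᶠ k in atTop, ((wseq k : ℝ) : EReal) ≤
        rockApprox g0 h (μs (N k)) G α (lam (N k)) (zs k) := by
      filter_upwards [hg0ev, hhev] with k hk1 hk2
      have : ((wseq k : ℝ) : EReal) = (c1 : EReal) + (c2 : EReal) + ((pen k : ℝ) : EReal) := by
        rw [hwdef]
        push_cast
        rfl
      rw [this]
      exact add_le_add (add_le_add hk1.le hk2) le_rfl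
    calc (⊤ : EReal) = liminf (fun k => ((wseq k : ℝ) : EReal)) atTop := hwtope.liminf_eq.symm
    _ ≤ _ := liminf_le_liminf hle

end Main

/-- Proposition 3.14 (total variation). -/
theorem total_variation_convergence

    {d n m : ℕ}
    (Ξ : Set (EuclideanSpace ℝ (Fin d))) (hΞne : Ξ.Nonempty) (hΞcl : IsClosed Ξ)
    (μ : Measure (EuclideanSpace ℝ (Fin d))) [IsProbabilityMeasure μ] (hμΞ : μ Ξᶜ = 0)
    (μs : ℕ → Measure (EuclideanSpace ℝ (Fin d))) [∀ ν, IsProbabilityMeasure (μs ν)]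
    (hμsΞ : ∀ ν, μs ν Ξᶜ = 0)
    (g0 : EuclideanSpace ℝ (Fin n) → EReal)
    (hg0lsc : LowerSemicontinuous g0)
    (hg0bot : ∀ x, g0 x ≠ ⊥) (hg0top : ∃ x, g0 x ≠ ⊤)
    (h : (Fin m → ℝ) → EReal)
    (hhlsc : LowerSemicontinuous h)
    (hhbot : ∀ u, h u ≠ ⊥) (hhtop : ∃ u, h u ≠ ⊤)
    (hhmono : ∀ u v : Fin m → ℝ, (∀ i, u i ≤ v i) → h u ≤ h v)
    (G : EuclideanSpace ℝ (Fin d) → EuclideanSpace ℝ (Fin n) → Fin m → ℝ)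

    (hGmeas : ∀ i, Measurable fun q : EuclideanSpace ℝ (Fin d) × EuclideanSpace ℝ (Fin n) =>
      G q.1 q.2 i)
    (hGlsc : ∀ ξ i, LowerSemicontinuous fun x => G ξ x i)
    (hGbd : ∀ x, ∃ ε > 0, ∃ M : ℝ, ∀ ξ ∈ Ξ, ∀ y ∈ closedBall x ε, ∀ i, |G ξ y i| ≤ M)
    (hargmin : ∃ x, phiFun g0 h μ G x ≠ ⊤ ∧ phiFun g0 h μ G x = ⨅ y, phiFun g0 h μ G y)
    (α : ℝ) (hα : 1 ≤ α)
    (lam : ℕ → ℝ) (hlam : ∀ ν, 0 < lam ν) (hlam0 : Tendsto lam atTop (𝓝 0))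

    (hd : Tendsto (fun ν => dTV Ξ (μs ν) μ) atTop (𝓝 0))
    (hrate : Tendsto (fun ν => (1 / lam ν) * dTV Ξ (μs ν) μ ^ α) atTop (𝓝 0)) :

    EpiConverges (fun ν => rockApprox g0 h (μs ν) G α (lam ν)) (rock g0 h μ G) ∧
    limsup (fun ν => ⨅ q, (rockApprox g0 h (μs ν) G α (lam ν)) q) atTop ≤ (⨅ q, rock g0 h μ G q) ∧
    (⨅ q, rock g0 h μ G q) = (⨅ x, phiFun g0 h μ G x) ∧
    (∀ (εs : ℕ → ℝ), (∀ ν, 0 ≤ εs ν) → ∀ ε : ℝ, Tendsto εs atTop (𝓝 ε) →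
      LimOut (fun ν => eArgmin (rockApprox g0 h (μs ν) G α (lam ν)) (εs ν)) ⊆
        eArgmin (rock g0 h μ G) ε) := by
  refine ⟨?_, ?_, inf_rock_eq μ g0 h G hg0bot hhbot, ?_⟩
  · -- epi-convergence
    intro z
    constructor
    · intro zsq hzsq
      exact liminf_key μ μs g0 h G α lam hGmeas hGlsc hGbd hg0lsc hg0bot hhlsc hhbot hhmono
        hΞcl hμΞ hμsΞ hα hlam hlam0 hd id tendsto_id z zsq hzsq
    · obtain ⟨u, x⟩ := z
      rcases eq_or_ne u 0 with rfl | hu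
      · obtain ⟨us, hus0, htend⟩ := recovery μ μs g0 h G α lam hGmeas hGbd hg0bot hhbot
          hΞcl hμΞ hμsΞ hα hlam hd hrate id tendsto_id x
        refine ⟨fun ν => (us ν, x), hus0.prodMk_nhds tendsto_const_nhds, ?_⟩
        have htend' : Tendsto (fun ν => rockApprox g0 h (μs ν) G α (lam ν) (us ν, x)) atTop
            (𝓝 (phiFun g0 h μ G x)) := htend
        rw [rock_zero μ g0 h G x]
        exact le_of_eq htend'.limsup_eq
      · refine ⟨fun _ => (u, x), tendsto_const_nhds, ?_⟩
        rw [rock_ne_zero μ g0 h G hg0bot hhbot hu x]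
        exact le_top
  · -- limsup of infima
    exact limsup_inf_le μ μs g0 h G α lam hGmeas hGbd hg0bot hhbot hΞcl hμΞ hμsΞ hα hlam
      hd hrate hargmin id tendsto_id
  · -- outer limit of ε-argmins
    intro εs hεs ε hεconv
    rintro z ⟨N, hNmono, zsq, hmem, hlim⟩
    have hN : Tendsto N atTop atTop := hNmono.tendsto_atTop
    have h1 : rock g0 h μ G z ≤
        liminf (fun k => rockApprox g0 h (μs (N k)) G α (lam (N k)) (zsq k)) atTop :=
      liminf_key μ μs g0 h G α lam hGmeas hGlsc hGbd hg0lsc hg0bot hhlsc hhbot hhmono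
        hΞcl hμΞ hμsΞ hα hlam hlam0 hd N hN z zsq hlim
    have h3 : rock g0 h μ G z ≤
        liminf (fun k => (⨅ q, rockApprox g0 h (μs (N k)) G α (lam (N k)) q) +
          (εs (N k) : EReal)) atTop :=
      h1.trans (liminf_le_liminf (Eventually.of_forall fun k => (hmem k).2))
    have hinf := limsup_inf_le μ μs g0 h G α lam hGmeas hGbd hg0bot hhbot hΞcl hμΞ hμsΞ hα
      hlam hd hrate hargmin N hN
    have hεN : Tendsto (fun k => εs (N k)) atTop (𝓝 ε) := hεconv.comp hN
    have key : ∀ η : ℝ, 0 < η →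
        rock g0 h μ G z ≤ (⨅ q, rock g0 h μ G q) + ((ε : EReal) + (η : EReal)) := by
      intro η hη
      have hev : ∀ᶠ k in atTop, εs (N k) ≤ ε + η :=
        (hεN.eventually (eventually_lt_nhds (by linarith : ε < ε + η))).mono
          fun k hk => hk.le
      have h4 : liminf (fun k => (⨅ q, rockApprox g0 h (μs (N k)) G α (lam (N k)) q) +
          (εs (N k) : EReal)) atTop ≤
          limsup (fun k => (⨅ q, rockApprox g0 h (μs (N k)) G α (lam (N k)) q) +
            ((ε + η : ℝ) : EReal)) atTop :=
        (liminf_le_liminf (hev.mono fun k hk =>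
          add_le_add le_rfl (EReal.coe_le_coe_iff.2 hk))).trans liminf_le_limsup
      have h5 : limsup (fun k => (⨅ q, rockApprox g0 h (μs (N k)) G α (lam (N k)) q) +
          ((ε + η : ℝ) : EReal)) atTop ≤
          limsup (fun k => ⨅ q, rockApprox g0 h (μs (N k)) G α (lam (N k)) q) atTop +
            ((ε + η : ℝ) : EReal) := by
        have h6 := EReal.limsup_add_le (f := atTop)
          (u := fun k => ⨅ q, rockApprox g0 h (μs (N k)) G α (lam (N k)) q)
          (v := fun _ => ((ε + η : ℝ) : EReal))
          (Or.inr (by rw [limsup_const]; exact EReal.coe_ne_top _))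
          (Or.inr (by rw [limsup_const]; exact EReal.coe_ne_bot _))
        rw [limsup_const] at h6
        exact h6
      calc rock g0 h μ G z ≤ _ := h3
      _ ≤ _ := h4
      _ ≤ _ := h5
      _ ≤ (⨅ q, rock g0 h μ G q) + ((ε + η : ℝ) : EReal) := add_le_add hinf le_rfl
      _ = (⨅ q, rock g0 h μ G q) + ((ε : EReal) + (η : EReal)) := by
          rw [EReal.coe_add]
    have hfinal : rock g0 h μ G z ≤ (⨅ q, rock g0 h μ G q) + (ε : EReal) := by
      apply ereal_le_of_forall_add
      intro η hη
      rw [add_assoc]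
      exact key η hη
    have hinftop : (⨅ q, rock g0 h μ G q) ≠ ⊤ := by
      obtain ⟨xst, hxtop, _⟩ := hargmin
      have h7 : (⨅ q, rock g0 h μ G q) ≤ phiFun g0 h μ G xst :=
        iInf_le_of_le (0, xst) (rock_zero μ g0 h G xst).le
      exact (h7.trans_lt (lt_top_iff_ne_top.2 hxtop)).ne
    refine ⟨?_, hfinal⟩
    intro htop
    rw [htop] at hfinal
    exact absurd (top_le_iff.1 hfinal)
      (EReal.add_lt_top hinftop (EReal.coe_ne_top ε)).ne

end
end

section
/- Let μ be a Borel probability measure on ℝ^d that decomposes as μ = μ_ac + μ_disc, where μ_ac is absolutely continuous with respect to Lebesgue measure 𝓛^d with Radon–Nikodym derivative bounded 𝓛^d-almost surely by M < ∞, and μ_disc is a discrete measure whose support {ξ_k : k ∈ ℕ} is uniformly discrete (there is ε' > 0 with B(ξ_j,ε') ∩ {ξ_k : k ∈ ℕ} = {ξ_j} for every j). Then for every nonempty compact convex set K ⊆ ℝ^d, the upper outer-Minkowski content of K with respect to μ is finite: limsup_{ε↓0} (1/ε) μ( (K + B(0,ε)) \ K ) < ∞. -/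
open MeasureTheory Filter Topology Metric Set Pointwise
open scoped ENNReal InnerProductSpace RealInnerProductSpace
noncomputable section


lemma aux_pow (d : ℕ) (t : ℝ) (ht : 0 ≤ t) (ht1 : t ≤ 1) :
    (1 + t) ^ d ≤ 1 + t * (d * 2 ^ d) := by
  induction d with
  | zero => simp
  | succ n ih =>
    have h2 : (1:ℝ) ≤ 2 ^ n := one_le_pow₀ (by norm_num)
    have hα : (0:ℝ) ≤ (n:ℝ) * 2 ^ n := by positivity
    have key : (1+t)^(n+1) ≤ (1 + t*(n*2^n))*(1+t) := by
      rw [pow_succ]; exact mul_le_mul_of_nonneg_right ih (by linarith)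
    have : (1 + t*((n:ℝ)*2^n))*(1+t) ≤ 1 + t * ((n+1) * 2^(n+1)) := by
      have htt : t*t ≤ t := by nlinarith [mul_nonneg ht (sub_nonneg.mpr ht1)]
      have e1 : t*t*((n:ℝ)*2^n) ≤ t*((n:ℝ)*2^n) := mul_le_mul_of_nonneg_right htt hα
      have e2 : t ≤ t * 2^n := by nlinarith
      rw [pow_succ]; nlinarith
    calc (1+t)^(n+1) ≤ (1 + t*(n*2^n))*(1+t) := key
      _ ≤ 1 + t * ((n+1) * 2^(n+1)) := this
      _ = 1 + t * ((n+1 : ℕ) * 2^(n+1)) := by push_cast; ring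

lemma aux_finite_separated {E : Type*} [MetricSpace E] {s C : Set E} {r : ℝ}
    (hr : 0 < r) (hsC : s ⊆ C) (hC : IsCompact C)
    (hsep : ∀ x ∈ s, ∀ y ∈ s, dist x y ≤ r → x = y) : s.Finite := by
  classical
  obtain ⟨t, htfin, htc⟩ := totallyBounded_iff.mp hC.totallyBounded (r/2) (by linarith)
  set f : E → E := fun x => if h : ∃ y ∈ t, x ∈ ball y (r/2) then h.choose else x with hf
  have key : ∀ x ∈ s, f x ∈ t ∧ x ∈ ball (f x) (r/2) := by
    intro x hx
    have : x ∈ ⋃ y ∈ t, ball y (r/2) := htc (hsC hx)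
    simp only [mem_iUnion] at this
    obtain ⟨y, hy, hxy⟩ := this
    have hex : ∃ y ∈ t, x ∈ ball y (r/2) := ⟨y, hy, hxy⟩
    simp only [hf, dif_pos hex]
    exact ⟨hex.choose_spec.1, hex.choose_spec.2⟩
  apply Set.Finite.of_finite_image (f := f) (htfin.subset ?_) ?_
  · rintro z ⟨x, hx, rfl⟩
    exact (key x hx).1
  · intro x hx y hy hxy
    apply hsep x hx y hy
    have h1 := (key x hx).2
    have h2 := (key y hy).2
    rw [hxy] at h1
    rw [mem_ball] at h1 h2
    have h3 : dist x y ≤ dist x (f y) + dist (f y) y := dist_triangle _ _ _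
    rw [dist_comm (f y) y] at h3
    linarith

set_option maxHeartbeats 1000000 in
lemma aux_vol {d : ℕ} (K : Set (EuclideanSpace ℝ (Fin d)))
    (hKne : K.Nonempty) (hKcomp : IsCompact K) (hKconv : Convex ℝ K) :
    ∃ (C : ℝ≥0∞) (δ : ℝ), C ≠ ⊤ ∧ 0 < δ ∧ ∀ ε : ℝ, 0 < ε → ε ≤ δ →
      volume ((K + closedBall 0 ε) \ K) ≤ ENNReal.ofReal ε * C := by
  have hKmeas : NullMeasurableSet K (volume : Measure (EuclideanSpace ℝ (Fin d))) :=
    hKcomp.isClosed.measurableSet.nullMeasurableSet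
  have hKfin : volume K ≠ ⊤ := hKcomp.measure_lt_top.ne
  by_cases hint : (interior K).Nonempty
  · -- nondegenerate case
    obtain ⟨x₀, hx₀⟩ := hint
    obtain ⟨r, hr, hball⟩ := Metric.mem_nhds_iff.mp (mem_interior_iff_mem_nhds.mp hx₀)
    set r' : ℝ := r / 2 with hr'
    have hr'pos : 0 < r' := by positivity
    have hcb : closedBall x₀ r' ⊆ K := (closedBall_subset_ball (by rw [hr']; linarith)).trans hball
    refine ⟨ENNReal.ofReal (d * 2 ^ d / r') * volume K, r', ?_, hr'pos, ?_⟩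
    · exact ENNReal.mul_ne_top ENNReal.ofReal_ne_top hKfin
    intro ε hε hεδ
    set t : ℝ := ε / r' with htdef
    have ht : 0 < t := by positivity
    have ht1 : t ≤ 1 := by rw [htdef, div_le_one hr'pos]; exact hεδ
    -- inclusion
    have hincl : K + closedBall 0 ε ⊆ (-(t • x₀)) +ᵥ ((1 + t) • K) := by
      rintro y hy
      rw [Set.mem_add] at hy
      obtain ⟨k, hk, b, hb, rfl⟩ := hy
      rw [mem_closedBall, dist_zero_right] at hb
      set c : EuclideanSpace ℝ (Fin d) := x₀ + t⁻¹ • b with hcdef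
      have hc : c ∈ K := by
        apply hcb
        rw [mem_closedBall]
        have h1 : dist c x₀ = ‖t⁻¹ • b‖ := by
          rw [hcdef, dist_eq_norm]; congr 1; abel
        have h2 : t⁻¹ = r' / ε := by rw [htdef, inv_div]
        rw [h1, norm_smul, norm_inv, Real.norm_of_nonneg ht.le, h2]
        calc r' / ε * ‖b‖ ≤ r' / ε * ε := by
              apply mul_le_mul_of_nonneg_left hb (by positivity)
          _ = r' := by field_simp
      have htc : t • c = t • x₀ + b := by
        rw [hcdef, smul_add, smul_smul, mul_inv_cancel₀ ht.ne', one_smul]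
      refine ⟨k + t • c, ?_, ?_⟩
      swap
      · show -(t • x₀) + (k + t • c) = k + b
        rw [htc]; abel
      rw [hKconv.add_smul (by norm_num : (0:ℝ) ≤ 1) ht.le]
      rw [Set.mem_add]
      exact ⟨k, by simpa using hk, t • c, smul_mem_smul_set hc, rfl⟩
    -- measure computation
    have hvol : volume (K + closedBall 0 ε) ≤
        ENNReal.ofReal ((1 + t) ^ d) * volume K := by
      calc volume (K + closedBall 0 ε) ≤ volume ((-(t • x₀)) +ᵥ ((1 + t) • K)) :=
            measure_mono hincl
        _ = volume ((1 + t) • K) := measure_vadd _ _ _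
        _ = ENNReal.ofReal ((1 + t) ^ d) * volume K := by
            rw [Measure.addHaar_smul, finrank_euclideanSpace_fin,
              abs_of_nonneg (by positivity)]
    have hsub : K ⊆ K + closedBall 0 ε :=
      subset_add_left K (mem_closedBall_self hε.le)
    rw [measure_diff hsub hKmeas hKfin]
    rw [tsub_le_iff_right]
    have hpow : (1 + t) ^ d ≤ 1 + ε * (d * 2 ^ d / r') := by
      have := aux_pow d t ht.le ht1
      have ht' : t * (d * 2 ^ d) = ε * (d * 2 ^ d / r') := by
        rw [htdef]; ring
      linarith [this, ht'.le, ht'.ge]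
    calc volume (K + closedBall 0 ε) ≤ ENNReal.ofReal ((1 + t) ^ d) * volume K := hvol
      _ ≤ ENNReal.ofReal (1 + ε * (d * 2 ^ d / r')) * volume K := by
          exact mul_le_mul_left (ENNReal.ofReal_le_ofReal hpow) _
      _ = (1 + ENNReal.ofReal (ε * (d * 2 ^ d / r'))) * volume K := by
          rw [ENNReal.ofReal_add (by norm_num) (by positivity), ENNReal.ofReal_one]
      _ = volume K + ENNReal.ofReal (ε * (d * 2 ^ d / r')) * volume K := by ring
      _ = ENNReal.ofReal ε * (ENNReal.ofReal (d * 2 ^ d / r') * volume K) + volume K := by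
          rw [ENNReal.ofReal_mul hε.le]; ring
  · -- degenerate case
    have hspan : affineSpan ℝ K ≠ ⊤ := by
      intro h
      exact hint (hKconv.interior_nonempty_iff_affineSpan_eq_top.mpr h)
    obtain ⟨x₀, hx₀⟩ := hKne
    set V : Submodule ℝ (EuclideanSpace ℝ (Fin d)) := (affineSpan ℝ K).direction with hVdef
    have hV : V ≠ ⊤ := by
      rw [hVdef, Ne, AffineSubspace.direction_eq_top_iff_of_nonempty
        ⟨x₀, subset_affineSpan ℝ K hx₀⟩]
      exact hspan
    have hVo : Vᗮ ≠ ⊥ := by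
      rw [Ne, Submodule.orthogonal_eq_bot_iff]
      exact hV
    obtain ⟨u₀, hu₀V, hu₀⟩ := Submodule.exists_mem_ne_zero_of_ne_bot hVo
    obtain ⟨u, huV, hu1⟩ : ∃ u, u ∈ Vᗮ ∧ ‖u‖ = 1 :=
      ⟨‖u₀‖⁻¹ • u₀, Submodule.smul_mem _ _ hu₀V, by
        rw [norm_smul, norm_inv, norm_norm, inv_mul_cancel₀ (norm_ne_zero_iff.mpr hu₀)]⟩
    have huu : ⟪u, u⟫_ℝ = 1 := by
      rw [real_inner_self_eq_norm_sq, hu1]; norm_num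
    obtain ⟨R, hRK⟩ := hKcomp.isBounded.subset_closedBall x₀
    have hR0 : 0 ≤ R := by
      have := hRK hx₀; rwa [mem_closedBall, dist_self] at this
    have horth : ∀ x ∈ K, ⟪u, x - x₀⟫_ℝ = 0 := by
      intro x hx
      have hmem : x - x₀ ∈ V := AffineSubspace.vsub_mem_direction
        (subset_affineSpan ℝ K hx) (subset_affineSpan ℝ K hx₀)
      rw [real_inner_comm]
      exact (Submodule.mem_orthogonal V u).mp huV _ hmem
    refine ⟨volume (closedBall (0 : EuclideanSpace ℝ (Fin d)) (R + 3)), 1,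
      measure_closedBall_lt_top.ne, one_pos, ?_⟩
    intro ε hε hε1
    -- the linear map scaling direction u by ε
    set f : EuclideanSpace ℝ (Fin d) →ₗ[ℝ] EuclideanSpace ℝ (Fin d) :=
      LinearMap.id + (ε - 1) • ((innerSL ℝ u).smulRight u).toLinearMap with hfdef
    have hfapp : ∀ x, f x = x + (ε - 1) • ⟪u, x⟫_ℝ • u := by
      intro x
      simp [hfdef, ContinuousLinearMap.smulRight_apply]
    have hdet : LinearMap.det f = ε := by
      classical
      set b := (EuclideanSpace.basisFun (Fin d) ℝ).toBasis with hbdef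
      rw [← LinearMap.det_toMatrix b]
      have hmat : LinearMap.toMatrix b b f =
          1 + Matrix.replicateCol Unit (fun i => (ε - 1) * u i) * Matrix.replicateRow Unit (fun i => u i) := by
        ext i j
        have hbj : (b j : EuclideanSpace ℝ (Fin d)) = EuclideanSpace.single j 1 := by
          rw [hbdef]
          simp [EuclideanSpace.basisFun_apply]
        have hinner : ⟪u, (b j : EuclideanSpace ℝ (Fin d))⟫_ℝ = u j := by
          rw [hbj, EuclideanSpace.inner_single_right]
          simp
        have hrepr : ∀ (x : EuclideanSpace ℝ (Fin d)), b.repr x i = x i := by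
          intro x; rw [hbdef]; rfl
        have hfbj : f (b j) = b j + ((ε - 1) * u j) • u := by
          rw [hfapp, hinner, smul_smul]
        rw [LinearMap.toMatrix_apply, hfbj, map_add, _root_.map_smul, Finsupp.add_apply,
          Finsupp.smul_apply, Module.Basis.repr_self, hrepr]
        rw [Matrix.add_apply, Matrix.mul_apply]
        simp only [Finset.univ_unique, Finset.sum_singleton, Matrix.replicateCol_apply,
          Matrix.replicateRow_apply, Matrix.one_apply, Finsupp.single_apply, smul_eq_mul]
        rcases eq_or_ne i j with h | h
        · subst h; simp
        · simp [h, Ne.symm h]; ring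
      rw [hmat, Matrix.det_one_add_replicateCol_mul_replicateRow]
      have hsum : dotProduct (fun i => u i) (fun i => (ε - 1) * u i) = (ε - 1) := by
        have h2 : ⟪u, u⟫_ℝ = ∑ i, u i * u i := by
          rw [PiLp.inner_apply]
          simp [RCLike.inner_apply, conj_trivial]
          exact Finset.sum_congr rfl (fun x _ => sq _)
        rw [dotProduct]
        calc ∑ i, u i * ((ε - 1) * u i) = (ε - 1) * ∑ i, u i * u i := by
              rw [Finset.mul_sum]; congr 1; ext i; ring
          _ = (ε - 1) * 1 := by rw [← h2, huu]
          _ = ε - 1 := by ring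
      rw [hsum]; ring
    -- inclusion
    have hincl : K + closedBall 0 ε ⊆ x₀ +ᵥ (f '' closedBall 0 (R + 3)) := by
      rintro y hy
      rw [Set.mem_add] at hy
      obtain ⟨k, hk, p, hp, rfl⟩ := hy
      rw [mem_closedBall, dist_zero_right] at hp
      set w : EuclideanSpace ℝ (Fin d) := (k - x₀) + p with hwdef
      set c : ℝ := ⟪u, w⟫_ℝ with hcdef
      have hc : |c| ≤ ε := by
        have : c = ⟪u, p⟫_ℝ := by
          rw [hcdef, hwdef, inner_add_right, horth k hk, zero_add]
        rw [this]
        calc |⟪u, p⟫_ℝ| ≤ ‖u‖ * ‖p‖ := abs_real_inner_le_norm u p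
          _ = ‖p‖ := by rw [hu1, one_mul]
          _ ≤ ε := hp
      set z : EuclideanSpace ℝ (Fin d) := w + (ε⁻¹ - 1) • c • u with hzdef
      have hinnz : ⟪u, z⟫_ℝ = ε⁻¹ * c := by
        rw [hzdef, inner_add_right, real_inner_smul_right, real_inner_smul_right, huu,
          ← hcdef]
        ring
      have hfz : f z = w := by
        have hsc : (ε - 1) • (ε⁻¹ * c) • u = -((ε⁻¹ - 1) • c • u) := by
          rw [smul_smul, smul_smul, ← neg_smul]
          congr 1
          field_simp
          ring
        rw [hfapp, hinnz, hzdef, hsc]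
        abel
      have hznorm : ‖z‖ ≤ R + 3 := by
        have hw : ‖w‖ ≤ R + 1 := by
          have hkx : ‖k - x₀‖ ≤ R := by
            have := hRK hk; rwa [mem_closedBall, dist_eq_norm] at this
          calc ‖w‖ ≤ ‖k - x₀‖ + ‖p‖ := norm_add_le _ _
            _ ≤ R + 1 := by linarith
        have hscal : |(ε⁻¹ - 1) * c| ≤ 2 := by
          rw [abs_mul]
          have hεinv : (1:ℝ) ≤ ε⁻¹ := by
            have h0 : ε * ε⁻¹ = 1 := mul_inv_cancel₀ hε.ne'
            nlinarith
          have h1 : |ε⁻¹ - 1| = ε⁻¹ - 1 := abs_of_nonneg (by linarith)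
          rw [h1]
          have : (ε⁻¹ - 1) * |c| ≤ (ε⁻¹ - 1) * ε :=
            mul_le_mul_of_nonneg_left hc (by linarith)
          have hεε : (ε⁻¹ - 1) * ε = 1 - ε := by field_simp
          nlinarith [abs_nonneg c]
        calc ‖z‖ ≤ ‖w‖ + ‖(ε⁻¹ - 1) • c • u‖ := norm_add_le _ _
          _ = ‖w‖ + |(ε⁻¹ - 1) * c| * ‖u‖ := by
              rw [smul_smul, norm_smul, Real.norm_eq_abs]
          _ ≤ (R + 1) + 2 * 1 := by
              rw [hu1]
              exact add_le_add hw (by simpa using hscal)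
          _ = R + 3 := by ring
      refine ⟨w, ⟨z, ?_, hfz⟩, ?_⟩
      swap
      · show x₀ + (k - x₀ + p) = k + p
        abel
      rw [mem_closedBall, dist_zero_right]
      exact hznorm
    calc volume ((K + closedBall 0 ε) \ K) ≤ volume (K + closedBall 0 ε) :=
          measure_mono diff_subset
      _ ≤ volume (x₀ +ᵥ (f '' closedBall 0 (R + 3))) := measure_mono hincl
      _ = volume (⇑f '' closedBall 0 (R + 3)) := by rw [measure_vadd]
      _ = ENNReal.ofReal |LinearMap.det f| *
            volume (closedBall (0 : EuclideanSpace ℝ (Fin d)) (R + 3)) :=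
          Measure.addHaar_image_linearMap _ _ _
      _ = ENNReal.ofReal ε * volume (closedBall (0 : EuclideanSpace ℝ (Fin d)) (R + 3)) := by
          rw [hdet, abs_of_pos hε]

/-- Proposition 4.4 (sufficient condition for finite upper outer-Minkowski content),
case of a convex body. -/
theorem finite_outer_minkowski_content_of_convex_body
    {d : ℕ}
    (μ μac μdisc : Measure (EuclideanSpace ℝ (Fin d))) [IsProbabilityMeasure μ]
    (hdecomp : μ = μac + μdisc)
    (hac : μac ≪ (volume : Measure (EuclideanSpace ℝ (Fin d))))
    (M : ℝ)
    (hM : ∀ᵐ x ∂(volume : Measure (EuclideanSpace ℝ (Fin d))),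
      μac.rnDeriv volume x ≤ ENNReal.ofReal M)
    (ξs : ℕ → EuclideanSpace ℝ (Fin d))
    (hsupp : μdisc (Set.range ξs)ᶜ = 0)
    (ε' : ℝ) (hε' : 0 < ε')
    (hdiscrete : ∀ j k, dist (ξs j) (ξs k) ≤ ε' → ξs j = ξs k)
    (K : Set (EuclideanSpace ℝ (Fin d)))
    (hKne : K.Nonempty) (hKcomp : IsCompact K) (hKconv : Convex ℝ K) :
    limsup (fun ε : ℝ => ENNReal.ofReal (1 / ε) * μ ((K + closedBall 0 ε) \ K))
      (𝓝[>] (0 : ℝ)) < ⊤ := by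
  haveI : IsFiniteMeasure μac :=
    isFiniteMeasure_of_le μ (hdecomp ▸ Measure.le_add_right le_rfl)
  -- absolutely continuous part is bounded by M times volume
  have hacM : ∀ s : Set (EuclideanSpace ℝ (Fin d)),
      μac s ≤ ENNReal.ofReal M * volume s := by
    intro s
    rw [← Measure.setLIntegral_rnDeriv hac s]
    calc ∫⁻ x in s, μac.rnDeriv volume x ∂volume
        ≤ ∫⁻ _ in s, ENNReal.ofReal M ∂volume :=
          lintegral_mono_ae (ae_restrict_of_ae hM)
      _ = ENNReal.ofReal M * volume s := by rw [setLIntegral_const]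
  -- the discrete part vanishes for small ε
  have hT : IsCompact (K + closedBall (0 : EuclideanSpace ℝ (Fin d)) ε') :=
    hKcomp.add (isCompact_closedBall _ _)
  set A : Set (EuclideanSpace ℝ (Fin d)) :=
    Set.range ξs ∩ ((K + closedBall 0 ε') \ K) with hAdef
  have hAfin : A.Finite := by
    apply aux_finite_separated hε' (fun x hx => hx.2.1) hT
    rintro x ⟨⟨j, rfl⟩, -⟩ y ⟨⟨k, rfl⟩, -⟩ h
    exact hdiscrete j k h
  obtain ⟨δ₂, hδ₂pos, hδ₂⟩ : ∃ δ₂ > 0, ∀ x ∈ A, δ₂ ≤ infDist x K := by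
    rcases A.eq_empty_or_nonempty with hAe | hAne
    · exact ⟨1, one_pos, by simp [hAe]⟩
    · obtain ⟨a, haA, hmin⟩ := Set.exists_min_image A (fun x => infDist x K) hAfin hAne
      refine ⟨infDist a K, ?_, hmin⟩
      exact (hKcomp.isClosed.notMem_iff_infDist_pos hKne).mp haA.2.2
  have hdisc0 : ∀ ε : ℝ, 0 < ε → ε ≤ ε' → ε < δ₂ →
      μdisc ((K + closedBall 0 ε) \ K) = 0 := by
    intro ε hε hεε' hεδ₂
    apply measure_mono_null _ hsupp
    intro x hx
    simp only [mem_compl_iff]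
    intro hxr
    have hxA : x ∈ A := by
      refine ⟨hxr, ?_, hx.2⟩
      exact add_subset_add_left (closedBall_subset_closedBall hεε') hx.1
    have h1 : δ₂ ≤ infDist x K := hδ₂ x hxA
    have h2 : infDist x K ≤ ε := by
      have hxadd := hx.1
      rw [Set.mem_add] at hxadd
      obtain ⟨k, hk, b, hb, hkb⟩ := hxadd
      rw [mem_closedBall, dist_zero_right] at hb
      have hdist : dist x k = ‖b‖ := by
        rw [dist_eq_norm, ← hkb]; congr 1; abel
      calc infDist x K ≤ dist x k := infDist_le_dist_of_mem hk
        _ ≤ ε := by rw [hdist]; exact hb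
    linarith
  -- the volume bound
  obtain ⟨C, δ₁, hC, hδ₁, hvol⟩ := aux_vol K hKne hKcomp hKconv
  have hev : ∀ᶠ ε in 𝓝[>] (0:ℝ),
      ENNReal.ofReal (1 / ε) * μ ((K + closedBall 0 ε) \ K) ≤
        ENNReal.ofReal M * C := by
    have hmem : Set.Ioo (0:ℝ) (min δ₁ (min ε' δ₂)) ∈ 𝓝[>] (0:ℝ) :=
      Ioo_mem_nhdsGT_of_mem ⟨le_refl 0, by positivity⟩
    filter_upwards [hmem] with ε hε
    obtain ⟨hε0, hεlt⟩ := hε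
    have hεδ₁ : ε ≤ δ₁ := le_of_lt (lt_of_lt_of_le hεlt (min_le_left _ _))
    have hεε' : ε ≤ ε' :=
      le_of_lt (lt_of_lt_of_le hεlt ((min_le_right _ _).trans (min_le_left _ _)))
    have hεδ₂ : ε < δ₂ := lt_of_lt_of_le hεlt ((min_le_right _ _).trans (min_le_right _ _))
    have hμ : μ ((K + closedBall 0 ε) \ K) ≤
        ENNReal.ofReal M * (ENNReal.ofReal ε * C) := by
      rw [hdecomp, Measure.add_apply, hdisc0 ε hε0 hεε' hεδ₂, add_zero]
      calc μac ((K + closedBall 0 ε) \ K)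
          ≤ ENNReal.ofReal M * volume ((K + closedBall 0 ε) \ K) := hacM _
        _ ≤ ENNReal.ofReal M * (ENNReal.ofReal ε * C) :=
            mul_le_mul_right (hvol ε hε0 hεδ₁) _
    calc ENNReal.ofReal (1/ε) * μ ((K + closedBall 0 ε) \ K)
        ≤ ENNReal.ofReal (1/ε) * (ENNReal.ofReal M * (ENNReal.ofReal ε * C)) :=
          mul_le_mul_right hμ _
      _ = (ENNReal.ofReal (1/ε) * ENNReal.ofReal ε) * (ENNReal.ofReal M * C) := by ring
      _ = ENNReal.ofReal M * C := by
          rw [← ENNReal.ofReal_mul (by positivity), one_div, inv_mul_cancel₀ hε0.ne',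
            ENNReal.ofReal_one, one_mul]
  have hlimsup : limsup (fun ε : ℝ => ENNReal.ofReal (1 / ε) * μ ((K + closedBall 0 ε) \ K))
      (𝓝[>] (0 : ℝ)) ≤ ENNReal.ofReal M * C :=
    limsup_le_of_le (by isBoundedDefault) hev
  exact lt_of_le_of_lt hlimsup (ENNReal.mul_lt_top ENNReal.ofReal_lt_top hC.lt_top)

end
end
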